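/- arXiv:1903.05782 — 15 statements merged into one kernel-verified Lean document; each statement's English description precedes it below -/
import Mathlib

section
/- Let A and B be rings and h : A → B a ring homomorphism such that B is an A-algebra via h (i.e., B is generated as a ring by h(A) together with the centralizer C_B(A)). Then for every prime two-sided ideal P of B, the preimage h⁻¹(P) is a prime two-sided ideal of A. -/
/-- A subset `I` of a ring `B` is a two-sided ideal: it contains `0`, is closed under
addition, and is closed under multiplication by arbitrary ring elements on both sides. -/
def IsTwoSidedIdealSet {B : Type*} [Ring B] (I : Set B) : Prop :=
  (0 : B) ∈ I ∧ (∀ a ∈ I, ∀ b ∈ I, a + b ∈ I) ∧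
    (∀ (x : B), ∀ a ∈ I, x * a ∈ I) ∧ (∀ (x : B), ∀ a ∈ I, a * x ∈ I)

/-- A subset `I` of a ring `B` is a prime two-sided ideal: it is a proper two-sided ideal
such that whenever `a * x * b ∈ I` for all `x`, either `a ∈ I` or `b ∈ I`. -/
def IsPrimeTwoSidedIdeal {B : Type*} [Ring B] (I : Set B) : Prop :=
  IsTwoSidedIdealSet I ∧ I ≠ Set.univ ∧
    ∀ a b : B, (∀ x : B, a * x * b ∈ I) → a ∈ I ∨ b ∈ I

/-- If `B` is an `A`-algebra via `h` (i.e. `B` is generated as a ring by the image of `h`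
together with the centralizer of that image), then the preimage under `h` of any prime
two-sided ideal of `B` is a prime two-sided ideal of `A`. -/
theorem preimage_prime_twoSidedIdeal_of_isAlgebra {A B : Type*} [Ring A] [Ring B]
    (h : A →+* B)
    (halg : Subring.closure (Set.range h ∪ Set.centralizer (Set.range h)) = ⊤)
    (P : Set B) (hP : IsPrimeTwoSidedIdeal P) :
    IsPrimeTwoSidedIdeal (⇑h ⁻¹' P) := by
  obtain ⟨⟨hP0, hPadd, hPl, hPr⟩, hPne, hPprime⟩ := hP
  refine ⟨⟨?_, ?_, ?_, ?_⟩, ?_, ?_⟩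
  · simpa using hP0
  · intro a ha b hb
    simp only [Set.mem_preimage, map_add]
    exact hPadd _ ha _ hb
  · intro x a ha
    simp only [Set.mem_preimage, map_mul]
    exact hPl _ _ ha
  · intro x a ha
    simp only [Set.mem_preimage, map_mul]
    exact hPr _ _ ha
  · intro hcon
    apply hPne
    have h1 : (1 : B) ∈ P := by
      have : (1 : A) ∈ ⇑h ⁻¹' P := hcon ▸ Set.mem_univ 1
      simpa using this
    ext b
    simp only [Set.mem_univ, iff_true]
    simpa using hPl b 1 h1
  · intro a b hab
    -- the set of "monomials" c * h x with c in the centralizer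
    set S : Set B := {y : B | ∃ c ∈ Set.centralizer (Set.range ⇑h), ∃ x : A, y = c * h x}
      with hS
    set Q : AddSubgroup B := AddSubgroup.closure S with hQdef
    have hgen : ∀ c ∈ Set.centralizer (Set.range ⇑h), ∀ x : A, c * h x ∈ Q := by
      intro c hc x
      exact AddSubgroup.subset_closure ⟨c, hc, x, rfl⟩
    -- Q is closed under multiplication
    have hmul : ∀ y ∈ Q, ∀ z ∈ Q, y * z ∈ Q := by
      intro y hy
      refine AddSubgroup.closure_induction (p := fun y _ => ∀ z ∈ Q, y * z ∈ Q)
        ?_ ?_ ?_ ?_ hy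
      · rintro _ ⟨c, hc, x, rfl⟩ z hz
        refine AddSubgroup.closure_induction
          (p := fun z _ => (c * h x) * z ∈ Q) ?_ ?_ ?_ ?_ hz
        · rintro _ ⟨c', hc', x', rfl⟩
          have e : (c * h x) * (c' * h x') = (c * c') * h (x * x') := by
            rw [map_mul, mul_assoc c (h x), ← mul_assoc (h x), hc' (h x) ⟨x, rfl⟩,
              mul_assoc c', ← mul_assoc c, ← mul_assoc (c * c')]
          rw [e]
          exact hgen _ (Set.mul_mem_centralizer hc hc') _
        · simpa using Q.zero_mem
        · intro u v _ _ hu hv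
          rw [mul_add]
          exact Q.add_mem hu hv
        · intro u _ hu
          rw [mul_neg]
          exact Q.neg_mem hu
      · intro z _
        simpa using Q.zero_mem
      · intro u v _ _ hu hv z hz
        rw [add_mul]
        exact Q.add_mem (hu z hz) (hv z hz)
      · intro u _ hu z hz
        rw [neg_mul]
        exact Q.neg_mem (hu z hz)
    -- every element of B lies in Q
    have hall : ∀ y : B, y ∈ Q := by
      intro y
      have hy : y ∈ Subring.closure (Set.range ⇑h ∪ Set.centralizer (Set.range ⇑h)) := by
        rw [halg]; trivial
      refine Subring.closure_induction (p := fun y _ => y ∈ Q) ?_ ?_ ?_ ?_ ?_ ?_ hy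
      · rintro y (⟨x, rfl⟩ | hc)
        · simpa using hgen 1 Set.one_mem_centralizer x
        · simpa using hgen y hc 1
      · exact Q.zero_mem
      · simpa using hgen 1 Set.one_mem_centralizer 1
      · intro u v _ _ hu hv; exact Q.add_mem hu hv
      · intro u _ hu; exact Q.neg_mem hu
      · intro u v _ _ hu hv; exact hmul u hu v hv
    -- hence h a * y * h b ∈ P for all y
    have key : ∀ y : B, h a * y * h b ∈ P := by
      intro y
      refine AddSubgroup.closure_induction
        (p := fun y _ => h a * y * h b ∈ P) ?_ ?_ ?_ ?_ (hall y)
      · rintro _ ⟨c, hc, x, rfl⟩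
        have e : h a * (c * h x) * h b = c * h (a * x * b) := by
          rw [map_mul, map_mul, ← mul_assoc (h a), hc (h a) ⟨a, rfl⟩]
          simp only [mul_assoc]
        rw [e]
        exact hPl _ _ (hab x)
      · simpa using hP0
      · intro u v _ _ hu hv
        have e : h a * (u + v) * h b = h a * u * h b + h a * v * h b := by noncomm_ring
        rw [e]
        exact hPadd _ hu _ hv
      · intro u _ hu
        have e : h a * (-u) * h b = (-1 : B) * (h a * u * h b) := by noncomm_ring
        rw [e]
        exact hPl _ _ hu
    exact hPprime (h a) (h b) key
end

section
/- Let A, B, C be rings, h : A → B and g : B → C ring homomorphisms. If B is an A-algebra via h (B is generated as a ring by h(A) ∪ C_B(A)) and C is a B-algebra via g (C is generated as a ring by g(B) ∪ C_C(B)), then C is an A-algebra via g ∘ h, i.e., C is generated as a ring by (g∘h)(A) together with the centralizer of (g∘h)(A) in C. -/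
/-- If `B` is an `A`-algebra via `h` (generated as a ring by `h(A)` and the centralizer of
`h(A)`) and `C` is a `B`-algebra via `g`, then `C` is an `A`-algebra via `g ∘ h`. -/
theorem isAlgebra_comp {A B C : Type*} [Ring A] [Ring B] [Ring C]
    (h : A →+* B) (g : B →+* C)
    (hB : Subring.closure (Set.range h ∪ Set.centralizer (Set.range h)) = ⊤)
    (hC : Subring.closure (Set.range g ∪ Set.centralizer (Set.range g)) = ⊤) :
    Subring.closure
      (Set.range (g.comp h) ∪ Set.centralizer (Set.range (g.comp h))) = ⊤ := by
  set S := Set.range (g.comp h) ∪ Set.centralizer (Set.range (g.comp h)) with hS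
  rw [eq_top_iff, ← hC, Subring.closure_le]
  rintro x (⟨b, rfl⟩ | hx)
  · -- g b ∈ closure S
    have hb : b ∈ Subring.closure (Set.range h ∪ Set.centralizer (Set.range h)) := by
      rw [hB]; trivial
    have : g b ∈ (Subring.closure (Set.range h ∪ Set.centralizer (Set.range h))).map g :=
      ⟨b, hb, rfl⟩
    rw [RingHom.map_closure] at this
    refine Subring.closure_mono ?_ this
    rintro y ⟨z, (⟨a, rfl⟩ | hz), rfl⟩
    · exact Or.inl ⟨a, rfl⟩
    · refine Or.inr ?_
      rintro c ⟨a, rfl⟩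
      simp only [RingHom.coe_comp, Function.comp_apply]
      rw [← map_mul, ← map_mul, hz (h a) ⟨a, rfl⟩]
  · -- x centralizes range g, hence range (g ∘ h)
    exact Subring.subset_closure (Or.inr fun c hc => hx c (by
      obtain ⟨a, rfl⟩ := hc; exact ⟨h a, rfl⟩))
end

section
/- Let A, B, C be rings, h : A → B and g : B → C ring homomorphisms. If B is a relatively commutative A-algebra via h (B is generated as a ring by h(A) ∪ Z(B)) and C is a relatively commutative B-algebra via g (C is generated as a ring by g(B) ∪ Z(C)), then C is a relatively commutative A-algebra via g ∘ h, i.e., C is generated as a ring by (g∘h)(A) ∪ Z(C). -/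
/-- If `B` is a relatively commutative `A`-algebra via `h` (generated as a ring by `h(A)`
and the center `Z(B)`) and `C` is a relatively commutative `B`-algebra via `g`, then `C`
is a relatively commutative `A`-algebra via `g ∘ h`. -/
theorem relativelyCommutative_comp {A B C : Type*} [Ring A] [Ring B] [Ring C]
    (h : A →+* B) (g : B →+* C)
    (hB : Subring.closure (Set.range h ∪ (Subring.center B : Set B)) = ⊤)
    (hC : Subring.closure (Set.range g ∪ (Subring.center C : Set C)) = ⊤) :
    Subring.closure (Set.range (g.comp h) ∪ (Subring.center C : Set C)) = ⊤ := by
  set S := Subring.closure (Set.range (g.comp h) ∪ (Subring.center C : Set C)) with hS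
  -- Step 1: g maps the center of B into the center of C.
  have hzc : ∀ z ∈ Subring.center B, g z ∈ Subring.center C := by
    intro z hz
    rw [Subring.mem_center_iff]
    intro c
    have hc : c ∈ Subring.closure (Set.range g ∪ (Subring.center C : Set C)) := by
      rw [hC]; trivial
    have hle : Subring.closure (Set.range g ∪ (Subring.center C : Set C)) ≤
        Subring.centralizer {g z} := by
      rw [Subring.closure_le]
      rintro x (⟨b, rfl⟩ | hx)
      · intro y hy
        rcases Set.mem_singleton_iff.mp hy with rfl
        rw [← map_mul, ← map_mul, (Subring.mem_center_iff.mp hz b)]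
      · intro y hy
        rcases Set.mem_singleton_iff.mp hy with rfl
        exact Subring.mem_center_iff.mp hx (g z)
    exact (hle hc (g z) rfl).symm
  -- Step 2: range g ⊆ S
  have hrg : Set.range g ⊆ (S : Set C) := by
    rintro _ ⟨b, rfl⟩
    have hb : b ∈ Subring.closure (Set.range h ∪ (Subring.center B : Set B)) := by
      rw [hB]; trivial
    have : Subring.closure (Set.range h ∪ (Subring.center B : Set B)) ≤ S.comap g := by
      rw [Subring.closure_le]
      rintro x (⟨a, rfl⟩ | hx)
      · exact Subring.subset_closure (Or.inl ⟨a, rfl⟩)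
      · exact Subring.subset_closure (Or.inr (hzc x hx))
    exact this hb
  rw [eq_top_iff, ← hC, Subring.closure_le]
  rintro x (hx | hx)
  · exact hrg hx
  · exact Subring.subset_closure (Or.inr hx)
end

section
/- Let A, B, C be rings, f : A → B and g : A → C ring homomorphisms such that B is a relatively commutative A-algebra via f (B is generated as a ring by f(A) ∪ Z(B)) and C is an A-algebra via g (C is generated as a ring by g(A) ∪ C_C(A)). Let h : B → C be a ring homomorphism with h ∘ f = g. Then C is a B-algebra via h (C is generated as a ring by h(B) together with the centralizer of h(B) in C) if and only if h(Z(B)) ⊆ Z(C). -/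
/-- Let `B` be a relatively commutative `A`-algebra via `f` (generated as a ring by `f(A)`
and the center `Z(B)`), let `C` be an `A`-algebra via `g` (generated as a ring by `g(A)`
and the centralizer of `g(A)`), and let `h : B →+* C` satisfy `h ∘ f = g`. Then `C` is a
`B`-algebra via `h` (generated as a ring by `h(B)` and the centralizer of `h(B)`) if and
only if `h` maps the center of `B` into the center of `C`. -/
theorem isAlgebra_iff_map_center_subset_center {A B C : Type*} [Ring A] [Ring B] [Ring C]
    (f : A →+* B) (g : A →+* C) (h : B →+* C) (hcomp : h.comp f = g)
    (hB : Subring.closure (Set.range f ∪ (Subring.center B : Set B)) = ⊤)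
    (hC : Subring.closure (Set.range g ∪ Set.centralizer (Set.range g)) = ⊤) :
    Subring.closure (Set.range h ∪ Set.centralizer (Set.range h)) = ⊤ ↔
      ∀ b ∈ Subring.center B, h b ∈ Subring.center C := by
  constructor
  · intro htop b hb
    rw [Subring.mem_center_iff]
    intro x
    have hle : Subring.closure (Set.range h ∪ Set.centralizer (Set.range h)) ≤
        Subring.centralizer {h b} := by
      rw [Subring.closure_le]
      rintro y (⟨b', rfl⟩ | hy)
      · rw [SetLike.mem_coe, Subring.mem_centralizer_iff]
        rintro m hm
        rw [Set.mem_singleton_iff] at hm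
        subst hm
        rw [← map_mul, ← map_mul, Subring.mem_center_iff.mp hb b']
      · rw [SetLike.mem_coe, Subring.mem_centralizer_iff]
        rintro m hm
        rw [Set.mem_singleton_iff] at hm
        subst hm
        exact Set.mem_centralizer_iff.mp hy (h b) ⟨b, rfl⟩
    have hx : x ∈ Subring.centralizer {h b} :=
      hle (htop ▸ Subring.mem_top x)
    exact (Subring.mem_centralizer_iff.mp hx (h b) rfl).symm
  · intro hz
    rw [eq_top_iff, ← hC, Subring.closure_le]
    rintro c (⟨a, rfl⟩ | hc)
    · exact Subring.subset_closure (Or.inl ⟨f a, by rw [← hcomp]; rfl⟩)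
    · refine Subring.subset_closure (Or.inr ?_)
      rw [Set.mem_centralizer_iff]
      rintro m ⟨b, rfl⟩
      have hle : Subring.closure (Set.range f ∪ (Subring.center B : Set B)) ≤
          (Subring.centralizer {c}).comap h := by
        rw [Subring.closure_le]
        rintro x (⟨a, rfl⟩ | hx)
        · rw [SetLike.mem_coe, Subring.mem_comap, Subring.mem_centralizer_iff]
          rintro m hm
          rw [Set.mem_singleton_iff] at hm
          rw [hm]
          have h1 : g a * c = c * g a := Set.mem_centralizer_iff.mp hc (g a) ⟨a, rfl⟩
          rw [← hcomp] at h1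
          exact h1.symm
        · rw [SetLike.mem_coe, Subring.mem_comap, Subring.mem_centralizer_iff]
          rintro m hm
          rw [Set.mem_singleton_iff] at hm
          rw [hm]
          exact Subring.mem_center_iff.mp (hz x hx) c
      have hb : b ∈ (Subring.centralizer {c}).comap h :=
        hle (hB ▸ Subring.mem_top b)
      exact (Subring.mem_centralizer_iff.mp (Subring.mem_comap.mp hb) c rfl).symm
end

section
/- Let A be a ring that is finitely generated as an algebra over its center Z(A), i.e., there is a finite subset S ⊆ A such that A is generated as a ring by Z(A) ∪ S. Let R be a commutative Z(A)-algebra that is flat as a Z(A)-module. Then the canonical ring homomorphism R → R ⊗_{Z(A)} A, r ↦ r ⊗ 1, is injective and its image is exactly the center of the ring R ⊗_{Z(A)} A. -/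
open scoped TensorProduct

section Aux

variable {A : Type*} [Ring A]

/-- The simultaneous commutator map `a ↦ (a * s - s * a)_{s ∈ S}`. -/
def commMapCenter (S : Finset A) : A →ₗ[Subring.center A] (S → A) where
  toFun a := fun s => a * s.1 - s.1 * a
  map_add' a b := by
    funext s
    show (a + b) * s.1 - s.1 * (a + b) = (a * s.1 - s.1 * a) + (b * s.1 - s.1 * b)
    rw [add_mul, mul_add]
    abel
  map_smul' z a := by
    funext s
    show (z : A) * a * s.1 - s.1 * ((z : A) * a) = (z : A) * (a * s.1 - s.1 * a)
    rw [mul_sub, ← mul_assoc, ← mul_assoc, Subring.mem_center_iff.1 z.2 s.1, mul_assoc (z : A) s.1 a]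

theorem exact_commMapCenter (S : Finset A)
    (hfg : Subring.closure ((Subring.center A : Set A) ∪ (S : Set A)) = ⊤) :
    Function.Exact (Algebra.linearMap (Subring.center A) A) (commMapCenter S) := by
  intro a
  constructor
  · intro h
    have hc : ∀ s ∈ S, a * s = s * a := by
      intro s hs
      have := congrFun h ⟨s, hs⟩
      simpa [commMapCenter, sub_eq_zero] using this
    have ha : a ∈ Subring.center A := by
      rw [Subring.mem_center_iff]
      intro g
      have hg : g ∈ Subring.closure ((Subring.center A : Set A) ∪ (S : Set A)) := by
        rw [hfg]; trivial
      induction hg using Subring.closure_induction with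
      | mem x hx =>
        rcases hx with hx | hx
        · exact (Subring.mem_center_iff.1 hx a).symm
        · exact (hc x hx).symm
      | zero => simp
      | one => simp
      | add x y hx hy ihx ihy => rw [add_mul, mul_add, ihx, ihy]
      | neg x hx ihx => rw [neg_mul, mul_neg, ihx]
      | mul x y hx hy ihx ihy =>
        rw [mul_assoc, ihy, ← mul_assoc, ihx, mul_assoc]
    exact ⟨⟨a, ha⟩, rfl⟩
  · rintro ⟨z, rfl⟩
    funext s
    show (z : A) * s.1 - s.1 * (z : A) = 0
    rw [Subring.mem_center_iff.1 z.2 s.1, sub_self]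

end Aux

/-- Let `A` be a ring which is finitely generated as an algebra over its center `Z(A)`
(there is a finite set `S ⊆ A` such that `A` is generated as a ring by `Z(A) ∪ S`), and
let `R` be a commutative `Z(A)`-algebra which is flat as a `Z(A)`-module. Then the
canonical ring homomorphism `R → R ⊗_{Z(A)} A`, `r ↦ r ⊗ 1`, is injective and its range
is exactly the center of `R ⊗_{Z(A)} A`. -/
theorem center_of_flat_baseChange {A : Type*} [Ring A]
    (S : Finset A)
    (hfg : Subring.closure ((Subring.center A : Set A) ∪ (S : Set A)) = ⊤)
    (R : Type*) [CommRing R] [Algebra (Subring.center A) R]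
    [Module.Flat (Subring.center A) R] :
    Function.Injective
      (Algebra.TensorProduct.includeLeftRingHom :
        R →+* R ⊗[Subring.center A] A) ∧
    Set.range
      (Algebra.TensorProduct.includeLeftRingHom :
        R →+* R ⊗[Subring.center A] A) =
      (Subring.center (R ⊗[Subring.center A] A) : Set (R ⊗[Subring.center A] A)) := by
  classical
  have hinj0 : Function.Injective (Algebra.linearMap (Subring.center A) A) := by
    intro x y h
    exact Subtype.val_injective h
  have hTinj : Function.Injective ((Algebra.linearMap (Subring.center A) A).lTensor R) :=
    Module.Flat.lTensor_preserves_injective_linearMap _ hinj0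
  have hcomp : ∀ r : R,
      (Algebra.linearMap (Subring.center A) A).lTensor R
        ((TensorProduct.rid (Subring.center A) R).symm r)
      = Algebra.TensorProduct.includeLeftRingHom r := by
    intro r
    rw [TensorProduct.rid_symm_apply]
    simp
  have hinj : Function.Injective
      (Algebra.TensorProduct.includeLeftRingHom : R →+* R ⊗[Subring.center A] A) := by
    intro r r' h
    have h2 := hTinj (by rw [hcomp, hcomp, h] :
      (Algebra.linearMap (Subring.center A) A).lTensor R
        ((TensorProduct.rid (Subring.center A) R).symm r) =
      (Algebra.linearMap (Subring.center A) A).lTensor R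
        ((TensorProduct.rid (Subring.center A) R).symm r'))
    exact (TensorProduct.rid (Subring.center A) R).symm.injective h2
  refine ⟨hinj, Set.Subset.antisymm ?_ ?_⟩
  · rintro x ⟨r, rfl⟩
    rw [SetLike.mem_coe, Subring.mem_center_iff]
    intro g
    induction g using TensorProduct.induction_on with
    | zero => simp
    | tmul r' a =>
      simp only [Algebra.TensorProduct.includeLeftRingHom_apply,
        Algebra.TensorProduct.tmul_mul_tmul, one_mul, mul_one, mul_comm r r']
    | add u v hu hv => rw [add_mul, mul_add, hu, hv]
  · intro x hx
    rw [SetLike.mem_coe, Subring.mem_center_iff] at hx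
    have hex := Module.Flat.lTensor_exact R (exact_commMapCenter S hfg)
    have key : ∀ y : R ⊗[Subring.center A] A,
        TensorProduct.piRightHom (Subring.center A) (Subring.center A) R (fun _ : S => A)
          ((commMapCenter S).lTensor R y)
        = fun s : S => y * (1 ⊗ₜ s.1) - (1 ⊗ₜ s.1) * y := by
      intro y
      induction y using TensorProduct.induction_on with
      | zero =>
        rw [LinearMap.map_zero, LinearMap.map_zero]
        funext s
        rw [zero_mul, mul_zero, sub_self]
        rfl
      | tmul r a =>
        funext s
        show r ⊗ₜ (a * s.1 - s.1 * a) = _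
        rw [TensorProduct.tmul_sub]
        simp [Algebra.TensorProduct.tmul_mul_tmul]
      | add u v hu hv =>
        rw [LinearMap.map_add, LinearMap.map_add, hu, hv]
        funext s
        show (u * (1 ⊗ₜ s.1) - (1 ⊗ₜ s.1) * u) + (v * (1 ⊗ₜ s.1) - (1 ⊗ₜ s.1) * v) = _
        rw [add_mul, mul_add]
        abel
    have hzero : (commMapCenter S).lTensor R x = 0 := by
      apply (TensorProduct.piRight (Subring.center A) (Subring.center A) R
        (fun _ : S => A)).injective
      rw [LinearEquiv.map_zero, TensorProduct.piRight_apply, key]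
      funext s
      rw [Pi.zero_apply, sub_eq_zero]
      exact (hx (1 ⊗ₜ s.1)).symm
    rcases (hex x).1 hzero with ⟨t, ht⟩
    refine ⟨(TensorProduct.rid (Subring.center A) R) t, ?_⟩
    rw [← hcomp, LinearEquiv.symm_apply_apply, ht]
end

section
/- Let A be a prime ring (i.e., for all a, b ∈ A, if a·x·b = 0 for every x ∈ A then a = 0 or b = 0, and A is nontrivial) and let f : A → B be an injective ring homomorphism. Then there exists a prime two-sided ideal P of B such that f⁻¹(P) = {0}, i.e., for all a ∈ A, f(a) ∈ P implies a = 0. -/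
section

variable {R : Type*} [Ring R]

def IsMSystem (S : Set R) : Prop :=
  ∀ a ∈ S, ∀ b ∈ S, ∃ x, a * x * b ∈ S

theorem isMSystem_ne_zero (hprime : ∀ a b : R, (∀ x : R, a * x * b = 0) → a = 0 ∨ b = 0) :
    IsMSystem {a : R | a ≠ 0} := by
  intro a ha b hb
  by_contra! h
  exact (hprime a b fun x => by simpa using h x).elim ha hb

theorem IsMSystem.image {S : Set R} (hS : IsMSystem S) {B : Type*} [Ring B] (f : R →+* B) :
    IsMSystem (f '' S) := by
  rintro _ ⟨a, ha, rfl⟩ _ ⟨b, hb, rfl⟩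
  obtain ⟨x, hx⟩ := hS a ha b hb
  exact ⟨f x, a * x * b, hx, by simp only [map_mul]⟩

namespace TwoSidedIdeal

theorem isTwoSidedIdealSet_coe (I : TwoSidedIdeal R) : IsTwoSidedIdealSet (I : Set R) :=
  ⟨I.zero_mem, fun _ ha _ hb => I.add_mem ha hb, fun x a ha => I.mul_mem_left x a ha,
    fun x a ha => I.mul_mem_right a x ha⟩

theorem exists_mem_iff_exists_mem_of_isChain {c : Set (TwoSidedIdeal R)}
    (hc : IsChain (· ≤ ·) c) (hne : c.Nonempty) :
    ∃ J : TwoSidedIdeal R, ∀ x, x ∈ J ↔ ∃ I ∈ c, x ∈ I := by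
  obtain ⟨I₀, hI₀⟩ := hne
  refine ⟨mk' {x | ∃ I ∈ c, x ∈ I} ⟨I₀, hI₀, I₀.zero_mem⟩ ?_
    (fun ⟨I, hI, hx⟩ => ⟨I, hI, I.neg_mem hx⟩)
    (fun ⟨I, hI, hy⟩ => ⟨I, hI, I.mul_mem_left _ _ hy⟩)
    (fun ⟨I, hI, hx⟩ => ⟨I, hI, I.mul_mem_right _ _ hx⟩), fun x => mem_mk' ..⟩
  rintro x y ⟨I, hI, hx⟩ ⟨J, hJ, hy⟩
  rcases hc.total hI hJ with hIJ | hJI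
  · exact ⟨J, hJ, J.add_mem (hIJ hx) hy⟩
  · exact ⟨I, hI, I.add_mem hx (hJI hy)⟩

theorem exists_le_maximal_disjoint {S : Set R} {I : TwoSidedIdeal R}
    (hI : Disjoint (I : Set R) S) :
    ∃ P, I ≤ P ∧ Maximal (fun J : TwoSidedIdeal R => Disjoint (J : Set R) S) P := by
  refine zorn_le_nonempty₀ _ (fun c hcS hc J hJ => ?_) I hI
  obtain ⟨U, hU⟩ := exists_mem_iff_exists_mem_of_isChain hc ⟨J, hJ⟩
  refine ⟨U, Set.disjoint_left.2 fun x hxU => ?_, fun K hK x hx => (hU x).2 ⟨K, hK, hx⟩⟩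
  obtain ⟨K, hK, hxK⟩ := (hU x).1 hxU
  exact Set.disjoint_left.1 (hcS hK) hxK

def leftColon (P : TwoSidedIdeal R) (b : R) : TwoSidedIdeal R :=
  mk' {u | ∀ x, u * x * b ∈ P} (fun x => by simp)
    (fun hu hv x => by simpa only [add_mul] using P.add_mem (hu x) (hv x))
    (fun hu x => by simpa only [neg_mul] using P.neg_mem (hu x))
    (fun {r _} hu x => by simpa only [mul_assoc] using P.mul_mem_left r _ (hu x))
    (fun {_ r} hu x => by simpa only [mul_assoc] using hu (r * x))

def rightColon (P : TwoSidedIdeal R) (a : R) : TwoSidedIdeal R :=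
  mk' {v | ∀ x, a * x * v ∈ P} (fun x => by simp)
    (fun hu hv x => by simpa only [mul_add] using P.add_mem (hu x) (hv x))
    (fun hu x => by simpa only [mul_neg] using P.neg_mem (hu x))
    (fun {r _} hu x => by simpa only [mul_assoc] using hu (x * r))
    (fun {_ r} hu x => by simpa only [mul_assoc] using P.mul_mem_right _ r (hu x))

theorem mem_leftColon {P : TwoSidedIdeal R} {b u : R} :
    u ∈ P.leftColon b ↔ ∀ x, u * x * b ∈ P :=
  mem_mk' ..

theorem mem_rightColon {P : TwoSidedIdeal R} {a v : R} :
    v ∈ P.rightColon a ↔ ∀ x, a * x * v ∈ P :=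
  mem_mk' ..

theorem le_leftColon (P : TwoSidedIdeal R) (b : R) : P ≤ P.leftColon b :=
  fun u hu => mem_leftColon.2 fun x => P.mul_mem_right _ b (P.mul_mem_right u x hu)

theorem le_rightColon (P : TwoSidedIdeal R) (a : R) : P ≤ P.rightColon a :=
  fun v hv => mem_rightColon.2 fun x => P.mul_mem_left (a * x) v hv

-- The `u` with `u * R * b ⊆ P`, and then the `v` with `s * R * v ⊆ P`, form two-sided ideals.
theorem mul_mul_mem_of_mem_sup_span {P : TwoSidedIdeal R} {a b s t : R}
    (hab : ∀ x, a * x * b ∈ P) (hs : s ∈ P ⊔ span {a}) (ht : t ∈ P ⊔ span {b}) (x : R) :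
    s * x * t ∈ P := by
  have hsb : s ∈ P.leftColon b :=
    sup_le (P.le_leftColon b) (span_le.2 (by simpa [mem_leftColon] using hab)) hs
  have hst : t ∈ P.rightColon s :=
    sup_le (P.le_rightColon s)
      (span_le.2 (by simpa [mem_rightColon] using mem_leftColon.1 hsb)) ht
  exact mem_rightColon.1 hst x

theorem isPrimeTwoSidedIdeal_of_maximal_disjoint {S : Set R} (hS : IsMSystem S)
    (hne : S.Nonempty) {P : TwoSidedIdeal R}
    (hP : Maximal (fun J : TwoSidedIdeal R => Disjoint (J : Set R) S) P) :
    IsPrimeTwoSidedIdeal (P : Set R) := by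
  have meets : ∀ a ∉ P, ∃ s ∈ S, s ∈ P ⊔ span {a} := fun a ha => by
    by_contra! h
    exact ha (hP.2 (Set.disjoint_right.2 h) le_sup_left (mem_sup_right (subset_span rfl)))
  refine ⟨P.isTwoSidedIdealSet_coe, fun htop => ?_, fun a b hab => ?_⟩
  · obtain ⟨s, hs⟩ := hne
    exact Set.disjoint_right.1 hP.1 hs (htop ▸ Set.mem_univ s)
  · by_contra! h
    obtain ⟨s, hsS, hs⟩ := meets a h.1
    obtain ⟨t, htS, ht⟩ := meets b h.2
    obtain ⟨x, hx⟩ := hS s hsS t htS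
    exact Set.disjoint_right.1 hP.1 hx (mul_mul_mem_of_mem_sup_span hab hs ht x)

end TwoSidedIdeal

end

/-- If `A` is a prime ring (nontrivial, and `a * x * b = 0` for all `x` forces `a = 0` or
`b = 0`) and `f : A →+* B` is an injective ring homomorphism, then there is a prime
two-sided ideal `P` of `B` whose preimage under `f` is `{0}`. -/
theorem exists_prime_twoSidedIdeal_preimage_eq_zero {A B : Type*} [Ring A] [Ring B]
    [Nontrivial A] (hprime : ∀ a b : A, (∀ x : A, a * x * b = 0) → a = 0 ∨ b = 0)
    (f : A →+* B) (hf : Function.Injective f) :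
    ∃ P : Set B, IsPrimeTwoSidedIdeal P ∧ ⇑f ⁻¹' P = {0} := by
  set S := f '' {a : A | a ≠ 0}
  have hS : IsMSystem S := (isMSystem_ne_zero hprime).image f
  obtain ⟨a₀, ha₀⟩ := exists_ne (0 : A)
  have hbot : Disjoint ((⊥ : TwoSidedIdeal B) : Set B) S := by
    rw [TwoSidedIdeal.coe_bot, Set.disjoint_singleton_left]
    rintro ⟨a, ha, hfa⟩
    exact ha (hf (hfa.trans (map_zero f).symm))
  obtain ⟨P, -, hP⟩ := TwoSidedIdeal.exists_le_maximal_disjoint hbot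
  refine ⟨P, TwoSidedIdeal.isPrimeTwoSidedIdeal_of_maximal_disjoint hS
    ⟨f a₀, a₀, ha₀, rfl⟩ hP, ?_⟩
  ext a
  refine ⟨fun ha => ?_, fun ha => by simp [Set.mem_singleton_iff.1 ha]⟩
  by_contra h0
  exact Set.disjoint_left.1 hP.1 ha ⟨a, h0, rfl⟩
end

section
/- Let R be a commutative ring and A an R-algebra that is finitely generated as an R-module. Let q be a prime two-sided ideal of A and let p be the preimage of q under the structure map R → A. Then q is a maximal two-sided ideal of A if and only if p is a maximal ideal of R. -/
/-- A subset `I` of a ring `B` is a maximal two-sided ideal: it is a proper two-sided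
ideal which is maximal among proper two-sided ideals. -/
def IsMaximalTwoSidedIdeal {B : Type*} [Ring B] (I : Set B) : Prop :=
  IsTwoSidedIdealSet I ∧ I ≠ Set.univ ∧
    ∀ J : Set B, IsTwoSidedIdealSet J → J ≠ Set.univ → I ⊆ J → J = I

/-- **Crux lemma**: if `B` is a prime ring which is a finite module over a field `k`
(acting centrally, via `Algebra k B`), then any nonzero two-sided ideal of `B`
(presented as a left ideal `I` which is stable under right multiplication) is all of `B`.
In other words, a finite-dimensional prime algebra over a field is a simple ring. -/
theorem crux_simple {k B : Type*} [Field k] [Ring B] [Algebra k B] [Module.Finite k B]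
    (hprime : ∀ a b : B, (∀ x : B, a * x * b = 0) → a = 0 ∨ b = 0)
    (I : Submodule B B) (hIr : ∀ (x : B), ∀ a ∈ I, a * x ∈ I) (hne : I ≠ ⊥) : I = ⊤ := by
  classical
  obtain ⟨a0, ha0I, ha0⟩ : ∃ a0 ∈ I, a0 ≠ (0 : B) := by
    by_contra h
    push_neg at h
    exact hne ((Submodule.eq_bot_iff I).2 h)
  haveI : Nontrivial B := ⟨a0, 0, ha0⟩
  haveI : FiniteDimensional k B := ‹Module.Finite k B›
  -- find a minimal nonzero left ideal L
  have htopne : (⊤ : Submodule B B) ≠ ⊥ := fun h =>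
    ha0 (by simpa using (Submodule.eq_bot_iff _).1 h a0 Submodule.mem_top)
  have hex : ∃ n : ℕ, n ∈ {n : ℕ | ∃ L : Submodule B B,
      L ≠ ⊥ ∧ Module.finrank k (L.restrictScalars k) = n} :=
    ⟨_, ⊤, htopne, rfl⟩
  obtain ⟨n₀, ⟨L, hL0, hLrank⟩, hmin⟩ :=
    (Nat.lt_wfRel.wf).has_min {n : ℕ | ∃ L : Submodule B B,
      L ≠ ⊥ ∧ Module.finrank k (L.restrictScalars k) = n} hex
  have hatom : IsAtom L := by
    refine ⟨hL0, fun L' hlt => ?_⟩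
    by_contra h0
    have hle : L'.restrictScalars k ≤ L.restrictScalars k := fun x hx => hlt.le hx
    have hne' : L'.restrictScalars k ≠ L.restrictScalars k := fun h =>
      hlt.ne (Submodule.restrictScalars_injective k B B h)
    have hltr : L'.restrictScalars k < L.restrictScalars k := lt_of_le_of_ne hle hne'
    have : Module.finrank k (L'.restrictScalars k) < n₀ :=
      hLrank ▸ Submodule.finrank_lt_finrank_of_lt hltr
    exact hmin _ ⟨L', h0, rfl⟩ this
  haveI hsimple : IsSimpleModule B L := isSimpleModule_iff_isAtom.mpr hatom
  -- a finite k-spanning family of L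
  obtain ⟨m, s, hs⟩ := Module.Finite.exists_fin (R := k) (M := L.restrictScalars k)
  set l : Fin m → B := fun i => (s i : B) with hl_def
  have hlL : ∀ i, l i ∈ L := fun i => (s i).2
  -- the key annihilation property
  have hann : ∀ b : B, (∀ i, b * l i = 0) → ∀ y ∈ L, b * y = 0 := by
    intro b hb y hy
    let g : L.restrictScalars k →ₗ[k] B :=
      (LinearMap.mulLeft k b).comp (L.restrictScalars k).subtype
    have hsub : Set.range s ⊆ (LinearMap.ker g : Set (L.restrictScalars k)) := by
      rintro _ ⟨i, rfl⟩
      simpa [g, LinearMap.mem_ker] using hb i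
    have htop : (⊤ : Submodule k (L.restrictScalars k)) ≤ LinearMap.ker g := by
      rw [← hs]
      exact Submodule.span_le.mpr hsub
    have : g ⟨y, hy⟩ = 0 := htop trivial
    simpa [g] using this
  -- embed B into (Fin m → L)
  let f : B →ₗ[B] (Fin m → L) :=
    { toFun := fun b i => ⟨b * l i, L.smul_mem b (hlL i)⟩
      map_add' := by
        intro b b'
        funext i
        exact Subtype.ext (add_mul b b' (l i))
      map_smul' := by
        intro r b
        funext i
        exact Subtype.ext (mul_assoc r b (l i)) }
  have hinj : Function.Injective f := by
    rw [← LinearMap.ker_eq_bot]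
    refine (Submodule.eq_bot_iff _).2 fun b hb => ?_
    have hb' : ∀ i, b * l i = 0 := by
      intro i
      have := congrFun (LinearMap.mem_ker.1 hb) i
      simpa [f, Subtype.ext_iff] using this
    obtain ⟨y0, hy0L, hy0⟩ := Submodule.ne_bot_iff L |>.1 hL0
    rcases hprime b y0 (fun x => by
      rw [mul_assoc]
      exact hann b hb' (x * y0) (L.smul_mem x hy0L)) with h | h
    · exact h
    · exact absurd h hy0
  -- semisimplicity
  haveI : IsSemisimpleModule B (Fin m → L) := by
    refine isSemisimpleModule_of_isSemisimpleModule_submodule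
      (s := (Set.univ : Set (Fin m)))
      (p := fun i => LinearMap.range (LinearMap.single B (fun _ : Fin m => L) i))
      (fun i _ => IsSemisimpleModule.range _) ?_
    simp_rw [iSup_univ, LinearMap.range_eq_map, Submodule.iSup_map_single, Submodule.pi_top]
  haveI : IsSemisimpleRing B := by
    have e : B ≃ₗ[B] LinearMap.range f := LinearEquiv.ofInjective f hinj
    exact IsSemisimpleModule.congr e
  -- the ideal is generated by an idempotent
  obtain ⟨e, he, hIe⟩ := IsSemisimpleRing.ideal_eq_span_idempotent (R := B) I
  have hax : ∀ x : B, a0 * x * (1 - e) = 0 := by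
    intro x
    have hx : a0 * x ∈ Ideal.span {e} := hIe ▸ hIr x a0 ha0I
    obtain ⟨b, hb⟩ := Submodule.mem_span_singleton.1 hx
    have hb' : b * e = a0 * x := hb
    calc a0 * x * (1 - e) = b * e * (1 - e) := by rw [hb']
      _ = b * (e * 1 - e * e) := by rw [mul_assoc, mul_sub]
      _ = 0 := by rw [mul_one, he.eq, sub_self, mul_zero]
  rcases hprime a0 (1 - e) hax with h | h
  · exact absurd h ha0
  · have he1 : e = 1 := by
      have := sub_eq_zero.mp h
      exact this.symm
    have h1I : (1 : B) ∈ I := by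
      rw [hIe, ← he1]
      exact Submodule.subset_span rfl
    refine Submodule.eq_top_iff'.2 fun x => ?_
    simpa using I.smul_mem x h1I

/-- Let `R` be a commutative ring, `A` an `R`-algebra which is finitely generated as an
`R`-module, `q` a prime two-sided ideal of `A` and `p` the ideal of `R` which is the
preimage of `q` under the structure map `R → A`. Then `q` is a maximal two-sided ideal of
`A` if and only if `p` is a maximal ideal of `R`. -/
theorem maximal_iff_comap_maximal {R A : Type*} [CommRing R] [Ring A] [Algebra R A]
    [Module.Finite R A] (q : Set A) (hq : IsPrimeTwoSidedIdeal q)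
    (p : Ideal R) (hp : (p : Set R) = ⇑(algebraMap R A) ⁻¹' q) :
    IsMaximalTwoSidedIdeal q ↔ p.IsMaximal := by
  classical
  obtain ⟨hq1, hq2, hq3⟩ := hq
  obtain ⟨h0q, haddq, hmulLq, hmulRq⟩ := hq1
  -- the quotient ring B := A / q
  set Q : TwoSidedIdeal A := TwoSidedIdeal.mk' q h0q
    (fun hx hy => haddq _ hx _ hy)
    (fun {x} hx => by simpa [neg_one_mul] using hmulLq (-1) x hx)
    (fun {x y} hy => hmulLq x y hy)
    (fun {x y} hx => hmulRq y x hx) with hQ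
  set c : RingCon A := Q.ringCon with hc
  set B := c.Quotient with hB
  set π : A →+* B := c.mk' with hπ
  have hmem : ∀ a : A, π a = 0 ↔ a ∈ q := by
    intro a
    have h1 : π a = π 0 ↔ c a 0 := c.eq
    have h2 : c a 0 ↔ a ∈ Q := (TwoSidedIdeal.mem_iff Q a).symm
    have h3 : a ∈ Q ↔ a ∈ q := TwoSidedIdeal.mem_mk' _ _ _ _ _ _ a
    rw [show (0 : B) = π 0 from (map_zero π).symm, h1, h2, h3]
  have hsurj : Function.Surjective π := fun b => Quotient.inductionOn' b fun a => ⟨a, rfl⟩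
  have h1q : (1 : A) ∉ q := by
    intro h
    exact hq2 (Set.eq_univ_iff_forall.2 fun x => by simpa using hmulLq x 1 h)
  haveI : Nontrivial B := ⟨π 1, 0, fun h => h1q ((hmem 1).1 h)⟩
  have hcentral : ∀ (r : R) (b : B),
      π (algebraMap R A r) * b = b * π (algebraMap R A r) := by
    intro r b
    obtain ⟨a, rfl⟩ := hsurj b
    rw [← map_mul, ← map_mul, Algebra.commutes]
  have hBprime : ∀ a b : B, (∀ x : B, a * x * b = 0) → a = 0 ∨ b = 0 := by
    intro a b h
    obtain ⟨a', rfl⟩ := hsurj a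
    obtain ⟨b', rfl⟩ := hsurj b
    rcases hq3 a' b' (fun x => (hmem _).1 (by rw [map_mul, map_mul]; exact h (π x))) with h' | h'
    · exact Or.inl ((hmem _).2 h')
    · exact Or.inr ((hmem _).2 h')
  have hpmem : ∀ r : R, r ∈ p ↔ algebraMap R A r ∈ q := by
    intro r
    constructor
    · intro h
      have : r ∈ (p : Set R) := h
      rw [hp] at this
      exact this
    · intro h
      have : r ∈ (⇑(algebraMap R A) ⁻¹' q) := h
      rw [← hp] at this
      exact this
  constructor
  · -- q maximal → p maximal
    rintro ⟨-, -, hmax3⟩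
    rw [Ideal.isMaximal_iff]
    constructor
    · intro h1p
      exact h1q (by simpa using (hpmem 1).1 h1p)
    · intro J x hpJ hxp hxJ
      set d : A := algebraMap R A x with hd
      have hdq : d ∉ q := fun h => hxp ((hpmem x).2 h)
      -- the two-sided ideal d*A + q
      set T : Set A := {a | ∃ u : A, ∃ cc ∈ q, a = d * u + cc} with hT
      have hTideal : IsTwoSidedIdealSet T := by
        refine ⟨⟨0, 0, h0q, by rw [mul_zero, add_zero]⟩, ?_, ?_, ?_⟩
        · rintro a ⟨u1, c1, hc1, rfl⟩ b ⟨u2, c2, hc2, rfl⟩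
          exact ⟨u1 + u2, c1 + c2, haddq _ hc1 _ hc2, by rw [mul_add]; abel⟩
        · rintro y a ⟨u, cc, hcc, rfl⟩
          refine ⟨y * u, y * cc, hmulLq y cc hcc, ?_⟩
          rw [mul_add, ← mul_assoc, ← mul_assoc, hd, Algebra.commutes x y]
        · rintro y a ⟨u, cc, hcc, rfl⟩
          exact ⟨u * y, cc * y, hmulRq y cc hcc, by rw [add_mul, mul_assoc]⟩
      have hqT : q ⊆ T := fun a ha => ⟨0, a, ha, by rw [mul_zero, zero_add]⟩
      have hdT : d ∈ T := ⟨1, 0, h0q, by rw [mul_one, add_zero]⟩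
      have hTuniv : T = Set.univ := by
        by_contra hTu
        exact hdq ((hmax3 T hTideal hTu hqT) ▸ hdT)
      obtain ⟨u, cc, hcc, h1⟩ : (1 : A) ∈ T := hTuniv ▸ Set.mem_univ _
      have hdu : π d * π u = 1 := by
        have := congrArg π h1
        rw [map_one, map_add, map_mul, (hmem cc).2 hcc, add_zero] at this
        exact this.symm
      have hcomm : π u * π d = π d * π u := (hcentral x (π u)).symm
      have hud : π u * π d = 1 := by rw [hcomm]; exact hdu
      -- u is integral over R
      obtain ⟨g, hgmonic, hgeval⟩ := IsIntegral.of_finite R u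
      set φ : R →+* B := π.comp (algebraMap R A) with hφ
      have heval : Polynomial.eval₂ φ (π u) g = 0 := by
        rw [hφ, ← Polynomial.hom_eval₂, hgeval, map_zero]
      set n := g.natDegree with hn_def
      have hn : n ≠ 0 := by
        intro h
        have : g = 1 := (hgmonic.natDegree_eq_zero).1 h
        rw [this, Polynomial.eval₂_one] at heval
        exact one_ne_zero heval
      obtain ⟨m, hm⟩ := Nat.exists_eq_succ_of_ne_zero hn
      rw [Polynomial.eval₂_eq_sum_range, Finset.sum_range_succ, ← hn_def,
        hgmonic.coeff_natDegree, map_one, one_mul] at heval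
      have hpow : (π u) ^ n = -∑ i ∈ Finset.range n, φ (g.coeff i) * (π u) ^ i :=
        eq_neg_of_add_eq_zero_right heval
      -- (π u)^i * (π d)^m = (π d)^(m - i) for i ≤ m
      have hcancel : ∀ i : ℕ, i ≤ m → (π u) ^ i * (π d) ^ m = (π d) ^ (m - i) := by
        intro i hi
        have h1 : (π d) ^ m = (π d) ^ i * (π d) ^ (m - i) := by
          rw [← pow_add, Nat.add_sub_cancel' hi]
        have h2 : (π u) ^ i * (π d) ^ i = 1 := by
          rw [← (Commute.mul_pow (by exact hcomm) i)]
          rw [hud, one_pow]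
        rw [h1, ← mul_assoc, h2, one_mul]
      have hucalc : π u = (π u) ^ n * (π d) ^ m := by
        have h : (π u) ^ n * (π d) ^ m = π u := by
          rw [hm, pow_succ', mul_assoc, hcancel m le_rfl, Nat.sub_self, pow_zero, mul_one]
        exact h.symm
      set r' : R := -∑ i ∈ Finset.range n, g.coeff i * x ^ (m - i) with hr'
      have hu_eq : π u = φ r' := by
        rw [hucalc, hpow, neg_mul, Finset.sum_mul]
        rw [hr', map_neg, map_sum]
        congr 1
        refine Finset.sum_congr rfl fun i hi => ?_
        have hi' : i ≤ m := by
          have := Finset.mem_range.1 hi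
          omega
        rw [mul_assoc, hcancel i hi', map_mul, map_pow]
        rfl
      have hxr' : φ (x * r') = 1 := by
        rw [map_mul, ← hu_eq]
        exact hdu
      have hxp' : x * r' - 1 ∈ p := by
        rw [hpmem, ← hmem]
        show φ (x * r' - 1) = 0
        rw [map_sub, hxr', map_one, sub_self]
      have : (1 : R) = x * r' - (x * r' - 1) := by ring
      rw [this]
      exact J.sub_mem (J.mul_mem_right r' hxJ) (hpJ hxp')
  · -- p maximal → q maximal
    intro hpmax
    refine ⟨⟨h0q, haddq, hmulLq, hmulRq⟩, hq2, fun J hJ hJne hqJ => ?_⟩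
    obtain ⟨hJ0, hJadd, hJl, hJr⟩ := hJ
    haveI := hpmax
    letI : Field (R ⧸ p) := Ideal.Quotient.field p
    set φ : R →+* B := π.comp (algebraMap R A) with hφ
    have hφker : ∀ r : R, r ∈ p → φ r = 0 := fun r hr => (hmem _).2 ((hpmem r).1 hr)
    set ψ : R ⧸ p →+* B := Ideal.Quotient.lift p φ hφker with hψ
    have hψmk : ∀ r : R, ψ (Ideal.Quotient.mk p r) = φ r := fun r =>
      Ideal.Quotient.lift_mk p φ hφker
    letI algRB : Algebra R B := φ.toAlgebra' (fun r b => hcentral r b)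
    letI algkB : Algebra (R ⧸ p) B := ψ.toAlgebra' (by
      intro cb x
      obtain ⟨r, rfl⟩ := Ideal.Quotient.mk_surjective cb
      rw [hψmk]
      exact hcentral r x)
    haveI finkB : Module.Finite (R ⧸ p) B := by
      obtain ⟨sA, hsA⟩ : ∃ sA : Finset A, Submodule.span R (sA : Set A) = ⊤ :=
        Module.finite_def.1 ‹Module.Finite R A›
      rw [Module.finite_def]
      refine ⟨sA.image π, ?_⟩
      rw [eq_top_iff]
      rintro b -
      obtain ⟨a, rfl⟩ := hsurj b
      have ha : a ∈ Submodule.span R (sA : Set A) := by rw [hsA]; trivial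
      refine Submodule.span_induction (p := fun a _ =>
        π a ∈ Submodule.span (R ⧸ p) ((sA.image π : Finset B) : Set B)) ?_ ?_ ?_ ?_ ha
      · intro y hy
        exact Submodule.subset_span (by simpa using Finset.mem_image_of_mem π hy)
      · simp only [map_zero]
        exact Submodule.zero_mem _
      · intro y z _ _ hy hz
        rw [map_add]
        exact Submodule.add_mem _ hy hz
      · intro r y _ hy
        have h1 : π (r • y) = (Ideal.Quotient.mk p r) • π y := by
          rw [Algebra.smul_def, map_mul, Algebra.smul_def]
          congr 1
        rw [h1]
        exact Submodule.smul_mem _ _ hy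
    -- image of J in B
    set I : Submodule B B :=
      { carrier := π '' J
        add_mem' := by
          rintro a b ⟨a', ha', rfl⟩ ⟨b', hb', rfl⟩
          exact ⟨a' + b', hJadd a' ha' b' hb', map_add π a' b'⟩
        zero_mem' := ⟨0, hJ0, map_zero π⟩
        smul_mem' := by
          rintro b x ⟨a', ha', rfl⟩
          obtain ⟨b', rfl⟩ := hsurj b
          exact ⟨b' * a', hJl b' a' ha', map_mul π b' a'⟩ } with hI
    have hIr : ∀ (x : B), ∀ a ∈ I, a * x ∈ I := by
      rintro x a ⟨a', ha', rfl⟩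
      obtain ⟨x', rfl⟩ := hsurj x
      exact ⟨a' * x', hJr x' a' ha', map_mul π a' x'⟩
    by_cases hIbot : I = ⊥
    · refine Set.Subset.antisymm (fun a haJ => ?_) hqJ
      have : π a ∈ I := ⟨a, haJ, rfl⟩
      rw [hIbot] at this
      exact (hmem a).1 (by simpa using this)
    · exfalso
      have hItop : I = ⊤ := crux_simple (k := R ⧸ p) hBprime I hIr hIbot
      have h1I : (1 : B) ∈ I := hItop ▸ Submodule.mem_top
      obtain ⟨a, haJ, ha1⟩ := h1I
      have haq : a - 1 ∈ q := (hmem _).1 (by rw [map_sub, ha1, map_one, sub_self])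
      have hnegJ : -(a - 1) ∈ J := by
        simpa [neg_one_mul] using hJl (-1) _ (hqJ haq)
      have h1J : (1 : A) ∈ J := by
        have := hJadd a haJ _ hnegJ
        simpa using this
      exact hJne (Set.eq_univ_iff_forall.2 fun x => by simpa using hJl x 1 h1J)
end

section
/- Let R be a commutative ring and A an R-algebra that is finitely generated as an R-module. Let I be a two-sided ideal of A and let I' ⊆ R be the preimage of I under the structure map R → A. Then the set of preimages in R of prime two-sided ideals q of A with I ⊆ q equals the set of prime ideals p of R with I' ⊆ p. In particular, every prime ideal of R containing I' is the preimage of some prime two-sided ideal of A containing I. -/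
/-! Given a prime `p ⊇ I'`, Zorn's lemma gives a two-sided ideal `m ⊇ I` maximal among those
whose contraction lies in `p`. Maximality makes `m` prime: if `a A b ⊆ m` with `a, b ∉ m`, the
colon ideals `{x | a A x ⊆ m}` and then `{x | v A x ⊆ m}` strictly contain `m`, so they meet the
image of `R \ p` in some `v` and `u`; since these are central, `vu ∈ m`, against `p` prime.
Finiteness makes the contraction all of `p`: for `r ∈ p`, an element `t ∈ R` with
`t ∈ m + A r` acts on the finite `R`-module `A / m` with image in `p (A / m)`, so by
Cayley–Hamilton some `t ^ n` lies in `p + ann (A / m) ⊆ p`; hence `m + A r` still contracts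
into `p`, and maximality puts `r` in `m`. -/

open Polynomial

namespace IsTwoSidedIdealSet

variable {B : Type*} [Ring B] {I : Set B}

theorem zero_mem (hI : IsTwoSidedIdealSet I) : (0 : B) ∈ I := hI.1

theorem add_mem (hI : IsTwoSidedIdealSet I) {a b : B} (ha : a ∈ I) (hb : b ∈ I) : a + b ∈ I :=
  hI.2.1 a ha b hb

theorem mul_mem_left (hI : IsTwoSidedIdealSet I) (x : B) {a : B} (ha : a ∈ I) : x * a ∈ I :=
  hI.2.2.1 x a ha

theorem mul_mem_right (hI : IsTwoSidedIdealSet I) (x : B) {a : B} (ha : a ∈ I) : a * x ∈ I :=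
  hI.2.2.2 x a ha

def toIdeal (hI : IsTwoSidedIdealSet I) : Ideal B where
  carrier := I
  zero_mem' := hI.zero_mem
  add_mem' := hI.add_mem
  smul_mem' x _ := hI.mul_mem_left x

@[simp]
theorem coe_toIdeal (hI : IsTwoSidedIdealSet I) : (hI.toIdeal : Set B) = I := rfl

theorem sUnion_of_isChain {c : Set (Set B)} (hc : ∀ J ∈ c, IsTwoSidedIdealSet J)
    (hchain : IsChain (· ⊆ ·) c) (hne : c.Nonempty) : IsTwoSidedIdealSet (⋃₀ c) := by
  obtain ⟨J₀, hJ₀⟩ := hne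
  refine ⟨⟨J₀, hJ₀, (hc J₀ hJ₀).zero_mem⟩, ?_, ?_, ?_⟩
  · rintro a ⟨J, hJ, ha⟩ b ⟨J', hJ', hb⟩
    rcases hchain.total hJ hJ' with h | h
    · exact ⟨J', hJ', (hc J' hJ').add_mem (h ha) hb⟩
    · exact ⟨J, hJ, (hc J hJ).add_mem ha (h hb)⟩
  · rintro x a ⟨J, hJ, ha⟩
    exact ⟨J, hJ, (hc J hJ).mul_mem_left x ha⟩
  · rintro x a ⟨J, hJ, ha⟩
    exact ⟨J, hJ, (hc J hJ).mul_mem_right x ha⟩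

theorem colon (hI : IsTwoSidedIdealSet I) (a : B) :
    IsTwoSidedIdealSet {x | ∀ y, a * y * x ∈ I} := by
  refine ⟨fun _ => by simpa using hI.zero_mem, fun x hx x' hx' y => ?_, fun z x hx y => ?_,
    fun z x hx y => ?_⟩
  · simpa [mul_add] using hI.add_mem (hx y) (hx' y)
  · simpa [mul_assoc] using hx (y * z)
  · simpa [mul_assoc] using hI.mul_mem_right z (hx y)

theorem subset_colon (hI : IsTwoSidedIdealSet I) (a : B) : I ⊆ {x | ∀ y, a * y * x ∈ I} :=
  fun _ hx _ => hI.mul_mem_left _ hx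

theorem add_mul_central (hI : IsTwoSidedIdealSet I) {c : B} (hc : ∀ y, Commute c y) :
    IsTwoSidedIdealSet {x | ∃ j ∈ I, ∃ a, x = j + a * c} := by
  refine ⟨⟨0, hI.zero_mem, 0, by simp⟩, ?_, ?_, ?_⟩
  · rintro _ ⟨j, hj, a, rfl⟩ _ ⟨j', hj', a', rfl⟩
    exact ⟨j + j', hI.add_mem hj hj', a + a', by noncomm_ring⟩
  · rintro x _ ⟨j, hj, a, rfl⟩
    exact ⟨x * j, hI.mul_mem_left x hj, x * a, by noncomm_ring⟩
  · rintro x _ ⟨j, hj, a, rfl⟩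
    exact ⟨j * x, hI.mul_mem_right x hj, a * x,
      by rw [add_mul, mul_assoc, (hc x).eq, mul_assoc]⟩

end IsTwoSidedIdealSet

theorem Polynomial.Monic.mem_of_eval_mem {R : Type*} [CommRing R] {p : Ideal R} (hp : p.IsPrime)
    {P : R[X]} (hP : P.Monic) (hcoeff : ∀ k < P.natDegree, P.coeff k ∈ p) {t : R}
    (ht : P.eval t ∈ p) : t ∈ p := by
  have hlower : ∑ k ∈ Finset.range P.natDegree, P.coeff k * t ^ k ∈ p :=
    p.sum_mem fun k hk => p.mul_mem_right _ (hcoeff k (Finset.mem_range.1 hk))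
  rw [eval_eq_sum_range, Finset.sum_range_succ, hP.coeff_natDegree, one_mul,
    p.add_mem_iff_right hlower] at ht
  exact hp.mem_of_pow_mem _ ht

theorem Ideal.IsPrime.mem_of_forall_smul_mem_smul_top {R M : Type*} [CommRing R] [AddCommGroup M]
    [Module R M] [Module.Finite R M] {p : Ideal R} (hp : p.IsPrime)
    (hann : Module.annihilator R M ≤ p) {t : R}
    (ht : ∀ x : M, t • x ∈ p • (⊤ : Submodule R M)) : t ∈ p := by
  obtain ⟨P, hP, -, hcoeff, hzero⟩ :=
    LinearMap.exists_monic_and_natDegree_eq_and_coeff_mem_pow_and_aeval_eq_zero R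
      (algebraMap R (Module.End R M) t) p (by rintro _ ⟨x, rfl⟩; exact ht x)
  refine hP.mem_of_eval_mem hp
    (fun k hk => Ideal.pow_le_self (Nat.sub_ne_zero_of_lt hk) (hcoeff k)) (hann ?_)
  rw [aeval_algebraMap_apply_eq_algebraMap_eval] at hzero
  exact Module.mem_annihilator.2 fun x => by simpa using LinearMap.congr_fun hzero x

section Algebra

variable (R A : Type*) [CommRing R] [Ring A] [Algebra R A]

def twoSidedIdealsContractingInto (p : Ideal R) : Set (Set A) :=
  {J | IsTwoSidedIdealSet J ∧ algebraMap R A ⁻¹' J ⊆ p}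

variable {R A}

theorem IsPrimeTwoSidedIdeal.isPrime_comap_algebraMap {q : Set A} (hq : IsPrimeTwoSidedIdeal q) :
    (hq.1.toIdeal.comap (algebraMap R A)).IsPrime where
  ne_top' htop := by
    have h1 : (1 : A) ∈ q := map_one (algebraMap R A) ▸ (Ideal.eq_top_iff_one _).1 htop
    exact hq.2.1 <| Set.eq_univ_of_forall fun x => mul_one x ▸ hq.1.mul_mem_left x h1
  mem_or_mem' {x y} hxy := by
    refine hq.2.2 _ _ fun z => ?_
    rw [mul_assoc, ← Algebra.commutes, ← mul_assoc, ← map_mul]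
    exact hq.1.mul_mem_right z hxy

theorem exists_maximal_twoSidedIdealsContractingInto {p : Ideal R} {I : Set A}
    (hI : I ∈ twoSidedIdealsContractingInto R A p) :
    ∃ m, I ⊆ m ∧ Maximal (· ∈ twoSidedIdealsContractingInto R A p) m := by
  refine zorn_subset_nonempty _ (fun c hc hchain hne => ?_) I hI
  refine ⟨⋃₀ c, ⟨.sUnion_of_isChain (fun J hJ => (hc hJ).1) hchain hne, ?_⟩,
    fun _ => Set.subset_sUnion_of_mem⟩
  rintro r ⟨J, hJ, hr⟩
  exact (hc hJ).2 hr

variable {p : Ideal R} {m : Set A}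

theorem exists_algebraMap_mem_of_maximal
    (hm : Maximal (· ∈ twoSidedIdealsContractingInto R A p) m) {J : Set A}
    (hJ : IsTwoSidedIdealSet J) (hmJ : m ⊆ J) {x : A} (hxJ : x ∈ J) (hxm : x ∉ m) :
    ∃ u ∉ p, algebraMap R A u ∈ J := by
  by_contra! h
  exact hxm (hm.2 ⟨hJ, fun u hu => by_contra fun hup => h u hup hu⟩ hmJ hxJ)

theorem isPrimeTwoSidedIdeal_of_maximal (hp : p.IsPrime)
    (hm : Maximal (· ∈ twoSidedIdealsContractingInto R A p) m) : IsPrimeTwoSidedIdeal m := by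
  obtain ⟨hmI, hmp⟩ := hm.1
  refine ⟨hmI, fun huniv => hp.one_notMem (hmp (by simp [huniv])), fun a b hab => ?_⟩
  by_contra! ⟨ha, hb⟩
  obtain ⟨v, hv, hav⟩ :=
    exists_algebraMap_mem_of_maximal hm (hmI.colon a) (hmI.subset_colon a) hab hb
  have hva : ∀ y, algebraMap R A v * y * a ∈ m := fun y => by
    simpa [mul_assoc, Algebra.commutes] using hmI.mul_mem_left y (hav 1)
  obtain ⟨u, hu, hvu⟩ :=
    exists_algebraMap_mem_of_maximal hm (hmI.colon _) (hmI.subset_colon _) hva ha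
  exact hp.mul_notMem hv hu (hmp (by simpa using hvu 1))

theorem preimage_add_mul_algebraMap_subset [Module.Finite R A] (hp : p.IsPrime)
    (hm : m ∈ twoSidedIdealsContractingInto R A p) {r : R} (hr : r ∈ p) :
    algebraMap R A ⁻¹' {x | ∃ j ∈ m, ∃ a, x = j + a * algebraMap R A r} ⊆ p := by
  rintro t ⟨j, hj, a, ht⟩
  set N := hm.1.toIdeal.restrictScalars R
  refine hp.mem_of_forall_smul_mem_smul_top (M := A ⧸ N) (fun s hs => hm.2 ?_) fun x => ?_
  · have hs1 := Module.mem_annihilator.1 hs (Submodule.Quotient.mk 1)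
    rw [← Submodule.Quotient.mk_smul, Submodule.Quotient.mk_eq_zero] at hs1
    simpa [N, Algebra.smul_def, ← SetLike.mem_coe] using hs1
  · obtain ⟨x, rfl⟩ := Submodule.Quotient.mk_surjective _ x
    have htx : t • x = x * j + r • (x * a) := by
      rw [Algebra.smul_def, Algebra.commutes, ht, mul_add, Algebra.smul_def, Algebra.commutes,
        mul_assoc]
    have hxj : Submodule.Quotient.mk (p := N) (x * j) = 0 :=
      (Submodule.Quotient.mk_eq_zero _).2 (hm.1.mul_mem_left x hj)
    rw [← Submodule.Quotient.mk_smul, htx, Submodule.Quotient.mk_add, hxj, zero_add,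
      Submodule.Quotient.mk_smul]
    exact Submodule.smul_mem_smul hr trivial

theorem preimage_algebraMap_eq_of_maximal [Module.Finite R A] (hp : p.IsPrime)
    (hm : Maximal (· ∈ twoSidedIdealsContractingInto R A p) m) :
    algebraMap R A ⁻¹' m = p := by
  refine hm.1.2.antisymm fun r hr => ?_
  have hK := hm.1.1.add_mul_central (Algebra.commutes r)
  exact hm.2 ⟨hK, preimage_add_mul_algebraMap_subset hp hm.1 hr⟩
    (fun j hj => ⟨j, hj, 0, by simp⟩) ⟨0, hm.1.1.zero_mem, 1, by simp⟩

end Algebra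

/-- Let `R` be a commutative ring, `A` an `R`-algebra which is finitely generated as an
`R`-module, `I` a two-sided ideal of `A` and `I'` its preimage in `R`. Then the set of
preimages in `R` of prime two-sided ideals of `A` containing `I` equals the set of
(underlying sets of) prime ideals of `R` containing `I'`; in particular every prime ideal
of `R` containing `I'` is the preimage of a prime two-sided ideal of `A` containing `I`. -/
theorem image_V_eq_V_comap {R A : Type*} [CommRing R] [Ring A] [Algebra R A]
    [Module.Finite R A] (I : Set A) (hI : IsTwoSidedIdealSet I) :
    {S : Set R | ∃ q : Set A, IsPrimeTwoSidedIdeal q ∧ I ⊆ q ∧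
        S = ⇑(algebraMap R A) ⁻¹' q} =
    {S : Set R | ∃ p : Ideal R, p.IsPrime ∧ ⇑(algebraMap R A) ⁻¹' I ⊆ ↑p ∧
        S = (p : Set R)} := by
  ext S
  constructor
  · rintro ⟨q, hq, hIq, rfl⟩
    exact ⟨_, hq.isPrime_comap_algebraMap, fun r hr => hIq hr, rfl⟩
  · rintro ⟨p, hp, hIp, rfl⟩
    obtain ⟨m, hIm, hm⟩ := exists_maximal_twoSidedIdealsContractingInto ⟨hI, hIp⟩
    exact ⟨m, isPrimeTwoSidedIdeal_of_maximal hp hm, hIm,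
      (preimage_algebraMap_eq_of_maximal hp hm).symm⟩
end

section
/- Let R be a commutative ring and A an R-algebra that is finitely generated as an R-module, and suppose the structure map R → A is injective. Then the induced map on spectra is surjective: for every prime ideal p of R there exists a prime two-sided ideal q of A whose preimage under R → A is p. -/
/-!
Write `S` for the image of `R ∖ p` in `A`. If `s ∉ p` had its image in `p A`, then `s • A ⊆ p A`,
and Cayley–Hamilton would give a monic polynomial relation `s ^ n + c₁ s ^ (n-1) + ⋯ + cₙ = 0`
acting on `A` with all `cᵢ ∈ p`; faithfulness makes it hold in `R`, forcing `s ∈ p`. So `p A` is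
disjoint from `S`, and Zorn gives a two-sided ideal `q ⊇ p A` maximal among those avoiding `S`.
Such a `q` is prime: if `a A b ⊆ q` with `a, b ∉ q`, then `{t | a A t ⊆ q}` strictly contains `q`,
hence contains some `t ∈ S`; then `{s | s A t ⊆ q}` contains `a`, hence some `s ∈ S`, and
`s t ∈ q ∩ S`. Finally `q ⊇ p A` and `q ∩ S = ∅` say exactly that `q` lies over `p`.
-/

section TwoSided

variable {B : Type*} [Ring B]

theorem IsTwoSidedIdealSet.sUnion {c : Set (Set B)} (hc : ∀ I ∈ c, IsTwoSidedIdealSet I)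
    (hchain : IsChain (· ⊆ ·) c) (hne : c.Nonempty) : IsTwoSidedIdealSet (⋃₀ c) := by
  obtain ⟨I₀, hI₀⟩ := hne
  refine ⟨⟨I₀, hI₀, (hc I₀ hI₀).1⟩, ?_, ?_, ?_⟩
  · rintro a ⟨I, hI, ha⟩ b ⟨J, hJ, hb⟩
    rcases hchain.total hI hJ with hIJ | hJI
    · exact ⟨J, hJ, (hc J hJ).2.1 a (hIJ ha) b hb⟩
    · exact ⟨I, hI, (hc I hI).2.1 a ha b (hJI hb)⟩
  · rintro x a ⟨I, hI, ha⟩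
    exact ⟨I, hI, (hc I hI).2.2.1 x a ha⟩
  · rintro x a ⟨I, hI, ha⟩
    exact ⟨I, hI, (hc I hI).2.2.2 x a ha⟩

theorem IsTwoSidedIdealSet.setOf_forall_mul_mul_mem {I : Set B} (hI : IsTwoSidedIdealSet I)
    (a : B) : IsTwoSidedIdealSet {b | ∀ x, a * x * b ∈ I} := by
  obtain ⟨hzero, hadd, -, hright⟩ := hI
  refine ⟨fun _ ↦ by simpa using hzero, fun b hb c hc x ↦ ?_, fun y b hb x ↦ ?_,
    fun y b hb x ↦ ?_⟩
  · simpa [mul_add] using hadd _ (hb x) _ (hc x)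
  · simpa [mul_assoc] using hb (x * y)
  · simpa [mul_assoc] using hright y _ (hb x)

theorem IsTwoSidedIdealSet.setOf_forall_mul_mul_mem' {I : Set B} (hI : IsTwoSidedIdealSet I)
    (b : B) : IsTwoSidedIdealSet {a | ∀ x, a * x * b ∈ I} := by
  obtain ⟨hzero, hadd, hleft, -⟩ := hI
  refine ⟨fun _ ↦ by simpa using hzero, fun a ha c hc x ↦ ?_, fun y a ha x ↦ ?_,
    fun y a ha x ↦ ?_⟩
  · simpa [add_mul] using hadd _ (ha x) _ (hc x)
  · simpa [mul_assoc] using hleft y _ (ha x)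
  · simpa [mul_assoc] using ha (y * x)

theorem exists_maximal_isTwoSidedIdealSet_disjoint {I S : Set B} (hI : IsTwoSidedIdealSet I)
    (hIS : Disjoint I S) :
    ∃ q, I ⊆ q ∧ Maximal (fun J ↦ IsTwoSidedIdealSet J ∧ Disjoint J S) q :=
  zorn_subset_nonempty {J | IsTwoSidedIdealSet J ∧ Disjoint J S} (fun c hc hchain hne ↦
    ⟨⋃₀ c, ⟨.sUnion (fun _ hJ ↦ (hc hJ).1) hchain hne,
      Set.disjoint_sUnion_left.2 fun _ hJ ↦ (hc hJ).2⟩,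
      fun _ ↦ Set.subset_sUnion_of_mem⟩) I ⟨hI, hIS⟩

theorem IsPrimeTwoSidedIdeal.of_maximal_disjoint {S : Submonoid B} {q : Set B}
    (hq : Maximal (fun J ↦ IsTwoSidedIdealSet J ∧ Disjoint J S) q) : IsPrimeTwoSidedIdeal q := by
  obtain ⟨hqideal, hqS⟩ := hq.prop
  have meets {J : Set B} (hJ : IsTwoSidedIdealSet J) (hqJ : q ⊆ J) (hJq : ¬ J ⊆ q) :
      ∃ s ∈ S, s ∈ J := by
    by_contra! hJS
    exact hJq (hq.eq_of_subset ⟨hJ, Set.disjoint_right.2 hJS⟩ hqJ).ge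
  refine ⟨hqideal, fun h ↦ hqS.notMem_of_mem_right S.one_mem (h ▸ trivial), fun a b hab ↦ ?_⟩
  by_contra! hnot
  obtain ⟨ha, hb⟩ := hnot
  obtain ⟨t, htS, ht⟩ := meets (hqideal.setOf_forall_mul_mul_mem a)
    (fun b hb x ↦ hqideal.2.2.1 _ b hb) (fun h ↦ hb (h hab))
  obtain ⟨s, hsS, hs⟩ := meets (hqideal.setOf_forall_mul_mul_mem' t)
    (fun a ha x ↦ hqideal.2.2.2 t _ (hqideal.2.2.2 x a ha)) (fun h ↦ ha (h ht))
  exact hqS.notMem_of_mem_right (S.mul_mem hsS htS) (by simpa using hs 1)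

theorem exists_isPrimeTwoSidedIdeal_superset_disjoint {I : Set B} (hI : IsTwoSidedIdealSet I)
    {S : Submonoid B} (hIS : Disjoint I S) :
    ∃ q, IsPrimeTwoSidedIdeal q ∧ I ⊆ q ∧ Disjoint q S :=
  let ⟨q, hIq, hq⟩ := exists_maximal_isTwoSidedIdealSet_disjoint hI hIS
  ⟨q, .of_maximal_disjoint hq, hIq, hq.1.2⟩

end TwoSided

open Polynomial in
theorem Ideal.mem_radical_of_forall_smul_mem_smul_top {R M : Type*} [CommRing R]
    [AddCommGroup M] [Module R M] [Module.Finite R M] [FaithfulSMul R M] {I : Ideal R} {s : R}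
    (h : ∀ x : M, s • x ∈ I • (⊤ : Submodule R M)) : s ∈ I.radical := by
  obtain ⟨g, hg_monic, -, hg_coeff, hg_aeval⟩ :=
    LinearMap.exists_monic_and_natDegree_eq_and_coeff_mem_pow_and_aeval_eq_zero R
      (algebraMap R (Module.End R M) s) I (by rintro _ ⟨x, rfl⟩; exact h x)
  have hroot : g.IsRoot s := by
    refine eq_of_smul_eq_smul (α := M) fun x ↦ ?_
    rw [zero_smul, ← Module.algebraMap_end_apply R R, ← aeval_algebraMap_apply_eq_algebraMap_eval,
      hg_aeval, LinearMap.zero_apply]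
  have hEisenstein : g.IsWeaklyEisensteinAt I :=
    ⟨fun hn ↦ Ideal.pow_le_self (Nat.sub_ne_zero_of_lt hn) (hg_coeff _)⟩
  exact ⟨g.natDegree, hEisenstein.pow_natDegree_le_of_root_of_monic_mem hroot hg_monic _ le_rfl⟩

section Algebra

variable {R A : Type*} [CommRing R] [Ring A] [Algebra R A]

theorem isTwoSidedIdealSet_smul_top (I : Ideal R) :
    IsTwoSidedIdealSet ((I • ⊤ : Submodule R A) : Set A) :=
  ⟨zero_mem _, fun _ ha _ hb ↦ add_mem ha hb,
    fun x _ ha ↦ Submodule.smul_top_le_comap_smul_top I (LinearMap.mulLeft R x) ha,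
    fun x _ ha ↦ Submodule.smul_top_le_comap_smul_top I (LinearMap.mulRight R x) ha⟩

theorem algebraMap_mem_smul_top {I : Ideal R} {r : R} (hr : r ∈ I) :
    algebraMap R A r ∈ (I • ⊤ : Submodule R A) := by
  simpa [Algebra.algebraMap_eq_smul_one] using Submodule.smul_mem_smul hr Submodule.mem_top

theorem disjoint_smul_top_map_primeCompl [Module.Finite R A] [FaithfulSMul R A] (p : Ideal R)
    [p.IsPrime] :
    Disjoint ((p • ⊤ : Submodule R A) : Set A) (p.primeCompl.map (algebraMap R A)) := by
  refine Set.disjoint_right.2 ?_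
  rintro _ ⟨s, hs, rfl⟩ hmem
  have hs_radical : s ∈ p.radical :=
    Ideal.mem_radical_of_forall_smul_mem_smul_top (M := A) fun x ↦ by
      rw [Algebra.smul_def s x]
      exact (isTwoSidedIdealSet_smul_top p).2.2.2 x _ hmem
  exact hs ((Ideal.IsPrime.radical ‹_›).le hs_radical)

end Algebra

/-- Let `R` be a commutative ring and `A` an `R`-algebra which is finitely generated as an
`R`-module, with injective structure map `R → A`. Then the induced map on spectra is
surjective: every prime ideal of `R` is the preimage of a prime two-sided ideal of `A`. -/
theorem spec_map_surjective_of_injective {R A : Type*} [CommRing R] [Ring A] [Algebra R A]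
    [Module.Finite R A] (hinj : Function.Injective (algebraMap R A))
    (p : Ideal R) (hp : p.IsPrime) :
    ∃ q : Set A, IsPrimeTwoSidedIdeal q ∧ ⇑(algebraMap R A) ⁻¹' q = (p : Set R) := by
  have := (faithfulSMul_iff_algebraMap_injective R A).2 hinj
  obtain ⟨q, hq, hpq, hqS⟩ := exists_isPrimeTwoSidedIdeal_superset_disjoint
    (isTwoSidedIdealSet_smul_top p) (disjoint_smul_top_map_primeCompl (A := A) p)
  refine ⟨q, hq, Set.ext fun r ↦ ⟨fun hr ↦ ?_, fun hr ↦ hpq (algebraMap_mem_smul_top hr)⟩⟩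
  by_contra hrp
  exact hqS.notMem_of_mem_left hr ⟨r, hrp, rfl⟩
end

section
/- Let R be a commutative local ring and A an R-algebra that is finitely generated as an R-module. Then the set of maximal two-sided ideals of A is finite. -/
section Aux

variable {B : Type*} [Ring B]

lemma Aux.univ_twoSided : IsTwoSidedIdealSet (Set.univ : Set B) :=
  ⟨trivial, fun _ _ _ _ => trivial, fun _ _ _ => trivial, fun _ _ _ => trivial⟩

lemma Aux.eq_univ_of_one_mem {I : Set B} (hI : IsTwoSidedIdealSet I) (h1 : (1 : B) ∈ I) :
    I = Set.univ := by
  ext x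
  simp only [Set.mem_univ, iff_true]
  simpa using hI.2.2.1 x 1 h1

lemma Aux.inter_twoSided {I J : Set B} (hI : IsTwoSidedIdealSet I) (hJ : IsTwoSidedIdealSet J) :
    IsTwoSidedIdealSet (I ∩ J) :=
  ⟨⟨hI.1, hJ.1⟩, fun a ha b hb => ⟨hI.2.1 a ha.1 b hb.1, hJ.2.1 a ha.2 b hb.2⟩,
    fun x a ha => ⟨hI.2.2.1 x a ha.1, hJ.2.2.1 x a ha.2⟩,
    fun x a ha => ⟨hI.2.2.2 x a ha.1, hJ.2.2.2 x a ha.2⟩⟩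

/-- If `M` is a maximal two-sided ideal and `I` a two-sided ideal not contained in `M`,
then `M + I` contains `1`. -/
lemma Aux.exists_add_eq_one {M I : Set B} (hM : IsMaximalTwoSidedIdeal M)
    (hI : IsTwoSidedIdealSet I) (h : ¬ I ⊆ M) : ∃ m ∈ M, ∃ x ∈ I, m + x = 1 := by
  set J : Set B := {z | ∃ m ∈ M, ∃ x ∈ I, z = m + x} with hJdef
  obtain ⟨hM0, hMadd, hMl, hMr⟩ := hM.1
  obtain ⟨hI0, hIadd, hIl, hIr⟩ := hI
  have hJ : IsTwoSidedIdealSet J := by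
    refine ⟨⟨0, hM0, 0, hI0, by rw [add_zero]⟩, ?_, ?_, ?_⟩
    · rintro _ ⟨m, hm, x, hx, rfl⟩ _ ⟨m', hm', x', hx', rfl⟩
      exact ⟨m + m', hMadd m hm m' hm', x + x', hIadd x hx x' hx', by abel⟩
    · rintro y _ ⟨m, hm, x, hx, rfl⟩
      exact ⟨y * m, hMl y m hm, y * x, hIl y x hx, by rw [mul_add]⟩
    · rintro y _ ⟨m, hm, x, hx, rfl⟩
      exact ⟨m * y, hMr y m hm, x * y, hIr y x hx, by rw [add_mul]⟩
  have hMJ : M ⊆ J := fun m hm => ⟨m, hm, 0, hI0, by rw [add_zero]⟩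
  have hJuniv : J = Set.univ := by
    by_contra hne
    have hJM := hM.2.2 J hJ hne hMJ
    obtain ⟨x, hxI, hxM⟩ := Set.not_subset.mp h
    exact hxM (hJM ▸ (⟨0, hM0, x, hxI, by rw [zero_add]⟩ : x ∈ J))
  have h1 : (1 : B) ∈ J := hJuniv ▸ Set.mem_univ 1
  obtain ⟨m, hm, x, hx, hmx⟩ := h1
  exact ⟨m, hm, x, hx, hmx.symm⟩

lemma Aux.not_subset_of_ne {M M' : Set B} (hM : IsMaximalTwoSidedIdeal M)
    (hM' : IsMaximalTwoSidedIdeal M') (hne : M ≠ M') : ¬ M ⊆ M' := fun h =>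
  hne (hM.2.2 M' hM'.1 hM'.2.1 h).symm

/-- Maximal two-sided ideals are "prime" with respect to intersections of two-sided
ideals not contained in them. -/
lemma Aux.inter_not_subset {M I J : Set B} (hM : IsMaximalTwoSidedIdeal M)
    (hI : IsTwoSidedIdealSet I) (hJ : IsTwoSidedIdealSet J)
    (hIM : ¬ I ⊆ M) (hJM : ¬ J ⊆ M) : ¬ (I ∩ J) ⊆ M := by
  obtain ⟨m1, hm1, x, hx, hx1⟩ := Aux.exists_add_eq_one hM hI hIM
  obtain ⟨m2, hm2, y, hy, hy1⟩ := Aux.exists_add_eq_one hM hJ hJM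
  intro hsub
  have hxy : x * y ∈ I ∩ J := ⟨hI.2.2.2 y x hx, hJ.2.2.1 x y hy⟩
  have h1 : (1 : B) ∈ M := by
    have hcalc : (1 : B) = m1 * m2 + m1 * y + x * m2 + x * y := by
      calc (1 : B) = (m1 + x) * (m2 + y) := by rw [hx1, hy1, one_mul]
        _ = m1 * m2 + m1 * y + x * m2 + x * y := by
            rw [add_mul, mul_add, mul_add]; abel
    rw [hcalc]
    have t1 : m1 * m2 ∈ M := hM.1.2.2.2 m2 m1 hm1
    have t2 : m1 * y ∈ M := hM.1.2.2.2 y m1 hm1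
    have t3 : x * m2 ∈ M := hM.1.2.2.1 x m2 hm2
    have t4 : x * y ∈ M := hsub hxy
    exact hM.1.2.1 _ (hM.1.2.1 _ (hM.1.2.1 _ t1 _ t2) _ t3) _ t4
  exact hM.2.1 (Aux.eq_univ_of_one_mem hM.1 h1)

end Aux

section Main

variable {R A : Type*} [CommRing R] [IsLocalRing R] [Ring A] [Algebra R A] [Module.Finite R A]

/-- A two-sided ideal of `A` as an `R`-submodule of `A`. -/
def Aux.subOfTwoSided (I : Set A) (hI : IsTwoSidedIdealSet I) : Submodule R A where
  carrier := I
  zero_mem' := hI.1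
  add_mem' := fun ha hb => hI.2.1 _ ha _ hb
  smul_mem' := fun r a ha => by
    rw [Algebra.smul_def]
    exact hI.2.2.1 _ a ha

/-- Every maximal two-sided ideal of `A` contains `𝔪 A`, by Nakayama's lemma. -/
lemma Aux.algebraMap_mem {M : Set A} (hM : IsMaximalTwoSidedIdeal M)
    {r : R} (hr : r ∈ IsLocalRing.maximalIdeal R) : algebraMap R A r ∈ M := by
  by_contra hrM
  set I : Set A := {z | ∃ a : A, z = algebraMap R A r * a} with hI
  have hItwo : IsTwoSidedIdealSet I := by
    refine ⟨⟨0, by rw [mul_zero]⟩, ?_, ?_, ?_⟩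
    · rintro _ ⟨a, rfl⟩ _ ⟨b, rfl⟩; exact ⟨a + b, by rw [mul_add]⟩
    · rintro x _ ⟨a, rfl⟩
      refine ⟨x * a, ?_⟩
      rw [← mul_assoc, ← mul_assoc, Algebra.commutes r x]
    · rintro x _ ⟨a, rfl⟩; exact ⟨a * x, by rw [mul_assoc]⟩
  have hInot : ¬ I ⊆ M := fun h => hrM (h ⟨1, by rw [mul_one]⟩)
  obtain ⟨m, hm, x, hx, hmx⟩ := Aux.exists_add_eq_one hM hItwo hInot
  obtain ⟨a, rfl⟩ := hx
  -- `1 = m + r • a` with `m ∈ M`, so `⊤ ≤ N ⊔ 𝔪 • ⊤` where `N` is the span of `M`.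
  set N : Submodule R A := Aux.subOfTwoSided M hM.1 with hN
  have hsup : (⊤ : Submodule R A) ≤ N ⊔ (IsLocalRing.maximalIdeal R) • (⊤ : Submodule R A) := by
    intro z _
    have hz : z = z * m + r • (z * a) := by
      rw [Algebra.smul_def]
      conv_lhs => rw [← mul_one z, ← hmx]
      rw [mul_add, ← mul_assoc z _ a, ← Algebra.commutes r z, mul_assoc]
    rw [hz]
    exact Submodule.add_mem_sup (hM.1.2.2.1 z m hm)
      (Submodule.smul_mem_smul hr Submodule.mem_top)
  have htop : (⊤ : Submodule R A) ≤ N := by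
    refine Submodule.le_of_le_smul_of_le_jacobson_bot Module.Finite.fg_top ?_ hsup
    rw [IsLocalRing.jacobson_eq_maximalIdeal ⊥ bot_ne_top]
  exact hM.2.1 (Aux.eq_univ_of_one_mem hM.1 (htop Submodule.mem_top))

lemma Aux.smulTop_mem {M : Set A} (hM : IsMaximalTwoSidedIdeal M) {x : A}
    (hx : x ∈ (IsLocalRing.maximalIdeal R • ⊤ : Submodule R A)) : x ∈ M := by
  have : (IsLocalRing.maximalIdeal R • ⊤ : Submodule R A) ≤ Aux.subOfTwoSided M hM.1 := by
    rw [Submodule.smul_le]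
    intro r hr a _
    show r • a ∈ M
    rw [Algebra.smul_def]
    exact hM.1.2.2.2 a _ (Aux.algebraMap_mem hM hr)
  exact this hx

end Main

/-- If `R` is a commutative local ring and `A` is an `R`-algebra which is finitely
generated as an `R`-module, then `A` has only finitely many maximal two-sided ideals. -/
theorem finite_maximal_twoSidedIdeals {R A : Type*} [CommRing R] [IsLocalRing R]
    [Ring A] [Algebra R A] [Module.Finite R A] :
    {I : Set A | IsMaximalTwoSidedIdeal I}.Finite := by
  by_contra hfin
  have hinf : {I : Set A | IsMaximalTwoSidedIdeal I}.Infinite := hfin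
  classical
  set 𝔪 : Ideal R := IsLocalRing.maximalIdeal R with h𝔪
  -- an injective sequence of maximal two-sided ideals
  let emb : ℕ ↪ ↥{I : Set A | IsMaximalTwoSidedIdeal I} := hinf.natEmbedding
  let g : ℕ → Set A := fun i => (emb i).1
  have hg : ∀ i, IsMaximalTwoSidedIdeal (g i) := fun i => (emb i).2
  have hginj : Function.Injective g := fun i j h =>
    emb.injective (Subtype.ext h)
  -- the descending chain of intersections
  let C : ℕ → Set A := fun i => Nat.rec Set.univ (fun j Cj => Cj ∩ g j) i
  have hC0 : C 0 = Set.univ := rfl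
  have hCsucc : ∀ i, C (i + 1) = C i ∩ g i := fun i => rfl
  have hCts : ∀ i, IsTwoSidedIdealSet (C i) := by
    intro i
    induction i with
    | zero => exact Aux.univ_twoSided
    | succ i ih => exact Aux.inter_twoSided ih (hg i).1
  have claim : ∀ i, ∀ M : Set A, IsMaximalTwoSidedIdeal M → (∀ j, j < i → g j ≠ M) →
      ¬ C i ⊆ M := by
    intro i
    induction i with
    | zero =>
      intro M hM _ hsub
      exact hM.2.1 (Set.univ_subset_iff.mp hsub)
    | succ i ih =>
      intro M hM hne
      have h1 : ¬ C i ⊆ M := ih M hM fun j hj => hne j (hj.trans (Nat.lt_succ_self i))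
      have h2 : ¬ g i ⊆ M := Aux.not_subset_of_ne (hg i) hM (hne i (Nat.lt_succ_self i))
      exact Aux.inter_not_subset hM (hCts i) (hg i).1 h1 h2
  have hstrict : ∀ i, ∃ x ∈ C i, x ∉ C (i + 1) := by
    intro i
    have : ¬ C i ⊆ g i := by
      refine claim i (g i) (hg i) fun j hj heq => ?_
      exact absurd (hginj heq) (Nat.ne_of_lt hj)
    obtain ⟨x, hx, hxg⟩ := Set.not_subset.mp this
    exact ⟨x, hx, fun hx' => hxg hx'.2⟩
  have hCanti : ∀ i j, i ≤ j → C j ⊆ C i := by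
    intro i j
    induction j with
    | zero => intro hij; rw [Nat.le_zero.mp hij]
    | succ j ih =>
      intro hij
      rcases eq_or_lt_of_le hij with h | h
      · rw [h]
      · exact fun x hx => ih (Nat.lt_succ_iff.mp h) hx.1
  -- the submodules
  let N : ℕ → Submodule R A := fun i => Aux.subOfTwoSided (C i) (hCts i)
  have hNker : ∀ i, (𝔪 • ⊤ : Submodule R A) ≤ N i := by
    intro i
    induction i with
    | zero => exact fun x _ => trivial
    | succ i ih =>
      intro x hx
      show x ∈ C i ∩ g i
      exact ⟨ih hx, Aux.smulTop_mem (hg i) hx⟩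
  -- pass to the quotient `V = A ⧸ 𝔪A`, a finite module over the residue field
  set V := A ⧸ (𝔪 • ⊤ : Submodule R A) with hV
  let D : ℕ → Submodule R V := fun i => (N i).map (Submodule.mkQ _)
  let E : ℕ → Submodule (R ⧸ 𝔪) V := fun i =>
    { carrier := D i
      zero_mem' := (D i).zero_mem
      add_mem' := fun ha hb => (D i).add_mem ha hb
      smul_mem' := by
        intro c v hv
        obtain ⟨r, rfl⟩ := Ideal.Quotient.mk_surjective c
        have : (Ideal.Quotient.mk 𝔪 r) • v = r • v := by
          rw [← Ideal.Quotient.algebraMap_eq, algebraMap_smul]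
        rw [this]
        exact (D i).smul_mem r hv }
  letI : Field (R ⧸ 𝔪) := Ideal.Quotient.field _
  haveI : Module.Finite (R ⧸ 𝔪) V := Module.Finite.of_restrictScalars_finite R _ _
  haveI : IsArtinian (R ⧸ 𝔪) V := inferInstance
  have hEanti : ∀ i j, i ≤ j → E j ≤ E i := by
    intro i j hij x hx
    obtain ⟨a, ha, rfl⟩ := hx
    exact ⟨a, hCanti i j hij ha, rfl⟩
  let F : ℕ →o (Submodule (R ⧸ 𝔪) V)ᵒᵈ :=
    ⟨fun i => OrderDual.toDual (E i), fun i j hij => hEanti i j hij⟩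
  obtain ⟨n, hn⟩ := IsArtinian.monotone_stabilizes F
  have hEeq : E n = E (n + 1) := hn (n + 1) (Nat.le_succ n)
  -- derive a contradiction with strictness
  obtain ⟨x, hxn, hxn1⟩ := hstrict n
  have hxD : Submodule.mkQ (𝔪 • ⊤ : Submodule R A) x ∈ D n := ⟨x, hxn, rfl⟩
  have hxE : Submodule.mkQ (𝔪 • ⊤ : Submodule R A) x ∈ E (n + 1) := by
    rw [← hEeq]; exact hxD
  obtain ⟨a, ha, hax⟩ := hxE
  -- `mkQ a = mkQ x` with `a ∈ C (n+1)`, so `x - a ∈ 𝔪 • ⊤ ≤ N (n+1)`, hence `x ∈ C (n+1)`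
  have hsub : x - a ∈ (𝔪 • ⊤ : Submodule R A) := by
    rw [← Submodule.Quotient.eq]
    exact hax.symm
  have hxa : x = a + (x - a) := by abel
  have : x ∈ N (n + 1) := by
    rw [hxa]
    exact (N (n + 1)).add_mem ha (hNker (n + 1) hsub)
  exact hxn1 this
end

section
/- Let R be a commutative integral domain and let A be an Azumaya algebra over R. Let e ∈ A be a nonzero idempotent (e² = e, e ≠ 0). Then e does not belong to any prime two-sided ideal of A; that is, for every prime two-sided ideal P of A, e ∉ P. -/
open scoped TensorProduct

/-- The canonical `R`-linear map `A ⊗[R] Aᵐᵒᵖ →ₗ[R] End_R(A)` sending `a ⊗ b` to the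
endomorphism `x ↦ a * x * b`. -/
noncomputable def mulLeftRight (R A : Type*) [CommRing R] [Ring A] [Algebra R A] :
    A ⊗[R] Aᵐᵒᵖ →ₗ[R] Module.End R A :=
  TensorProduct.lift <| LinearMap.mk₂ R
    (fun a b => LinearMap.mulRight R b.unop ∘ₗ LinearMap.mulLeft R a)
    (fun a a' b => by ext x; simp [add_mul])
    (fun r a b => by ext x; simp [smul_mul_assoc])
    (fun a b b' => by ext x; simp [mul_add])
    (fun r a b => by ext x; simp [mul_smul_comm])

/-- `A` is an Azumaya algebra over the commutative ring `R`: it is a finitely generated,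
projective and faithful `R`-module and the natural map `A ⊗[R] Aᵐᵒᵖ → End_R(A)`,
`a ⊗ b ↦ (x ↦ a * x * b)`, is bijective. -/
def IsAzumaya' (R A : Type*) [CommRing R] [Ring A] [Algebra R A] : Prop :=
  Module.Finite R A ∧ Module.Projective R A ∧ FaithfulSMul R A ∧
    Function.Bijective (mulLeftRight R A)

/-!
By the Azumaya condition every `R`-linear endomorphism of `A` has the form `x ↦ ∑ aᵢ * x * bᵢ`,
so it maps the two-sided ideal `P` into itself. Applied to the coordinate functionals of the
projective module `A`, this puts every coordinate of `e` into `p = P ∩ R`, i.e. `e ∈ p • A`.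
As `e` is idempotent, the finitely generated `R`-module `e * A` then satisfies
`e * A ≤ p • (e * A)`, and Nakayama gives `r ≡ 1 mod p` with `r • e = 0`. Since `1 ∉ p`,
`r ≠ 0`, and `A` is torsion-free, being projective over a domain; hence `e = 0`.
-/

namespace IsTwoSidedIdealSet

variable {B : Type*} [Ring B] {I : Set B}

def toTwoSidedIdeal (hI : IsTwoSidedIdealSet I) : TwoSidedIdeal B :=
  .mk' I hI.1 (hI.2.1 _ · _ ·) (fun hx => by simpa using hI.2.2.1 (-1) _ hx)
    (hI.2.2.1 _ _ ·) (hI.2.2.2 _ _ ·)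

@[simp]
lemma mem_toTwoSidedIdeal (hI : IsTwoSidedIdealSet I) {x : B} :
    x ∈ hI.toTwoSidedIdeal ↔ x ∈ I :=
  TwoSidedIdeal.mem_mk' ..

end IsTwoSidedIdealSet

lemma IsPrimeTwoSidedIdeal.one_notMem {B : Type*} [Ring B] {I : Set B}
    (hI : IsPrimeTwoSidedIdeal I) : (1 : B) ∉ I := fun h1 =>
  hI.2.1 <| Set.eq_univ_of_forall fun x => by simpa using hI.1.2.2.1 x 1 h1

section mulLeftRight

variable {R A : Type*} [CommRing R] [Ring A] [Algebra R A]

@[simp]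
lemma mulLeftRight_tmul (a : A) (b : Aᵐᵒᵖ) (x : A) :
    mulLeftRight R A (a ⊗ₜ[R] b) x = a * x * b.unop := by
  simp [mulLeftRight]

lemma mulLeftRight_apply_mem (I : TwoSidedIdeal A) (t : A ⊗[R] Aᵐᵒᵖ) {x : A} (hx : x ∈ I) :
    mulLeftRight R A t x ∈ I := by
  induction t using TensorProduct.induction_on with
  | zero => simp
  | tmul a b => simpa using I.mul_mem_right _ _ (I.mul_mem_left a _ hx)
  | add t t' ht ht' => simpa using I.add_mem ht ht'

lemma TwoSidedIdeal.apply_mem_of_surjective_mulLeftRight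
    (hsurj : Function.Surjective (mulLeftRight R A)) (I : TwoSidedIdeal A)
    (φ : Module.End R A) {x : A} (hx : x ∈ I) : φ x ∈ I := by
  obtain ⟨t, rfl⟩ := hsurj φ
  exact mulLeftRight_apply_mem I t hx

end mulLeftRight

lemma Module.Projective.mem_smul_top_of_forall_dual_apply_mem {R M : Type*} [CommRing R]
    [AddCommGroup M] [Module R M] [Module.Projective R M] {I : Ideal R} {m : M}
    (h : ∀ φ : Module.Dual R M, φ m ∈ I) : m ∈ I • (⊤ : Submodule R M) := by
  obtain ⟨s, hs⟩ := Module.projective_def'.mp ‹_›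
  rw [← LinearMap.id_apply (R := R) m, ← hs, LinearMap.comp_apply,
    Finsupp.linearCombination_apply]
  exact Submodule.sum_mem _ fun x _ =>
    Submodule.smul_mem_smul (h (Finsupp.lapply x ∘ₗ s)) Submodule.mem_top

lemma IsIdempotentElem.exists_sub_one_mem_and_smul_eq_zero {R A : Type*} [CommRing R] [Ring A]
    [Algebra R A] [Module.Finite R A] {e : A} (he : IsIdempotentElem e) {I : Ideal R}
    (heI : e ∈ I • (⊤ : Submodule R A)) : ∃ r : R, r - 1 ∈ I ∧ r • e = 0 := by
  set M : Submodule R A := Submodule.map (LinearMap.mulLeft R e) ⊤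
  have hmul_mem : ∀ x : A, e * x ∈ I • (⊤ : Submodule R A) := fun x => by
    have := Submodule.mem_map_of_mem (f := LinearMap.mulRight R x) heI
    rw [Submodule.map_smul''] at this
    exact Submodule.smul_mono le_rfl le_top this
  have hM : M ≤ I • M := by
    rintro _ ⟨x, -, rfl⟩
    have := Submodule.mem_map_of_mem (f := LinearMap.mulLeft R e) (hmul_mem x)
    rwa [Submodule.map_smul'', LinearMap.mulLeft_apply, ← mul_assoc, he.eq] at this
  obtain ⟨r, hr1, hr⟩ := Submodule.exists_sub_one_mem_and_smul_eq_zero_of_fg_of_le_smul I M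
    ((Module.Finite.fg_top).map _) hM
  exact ⟨r, hr1, by simpa using hr e ⟨1, trivial, mul_one e⟩⟩

/-- Let `A` be an Azumaya algebra over a commutative integral domain `R` and let `e` be a
nonzero idempotent of `A`. Then `e` lies in no prime two-sided ideal of `A`. -/
theorem idempotent_not_mem_prime_of_azumaya {R A : Type*} [CommRing R] [IsDomain R]
    [Ring A] [Algebra R A] (hAz : IsAzumaya' R A)
    (e : A) (he : e * e = e) (he0 : e ≠ 0)
    (P : Set A) (hP : IsPrimeTwoSidedIdeal P) : e ∉ P := by
  obtain ⟨_, _, -, -, hsurj⟩ := hAz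
  intro heP
  set I : TwoSidedIdeal A := hP.1.toTwoSidedIdeal
  set p : Ideal R := (I.comap (algebraMap R A)).asIdeal
  have hp : (1 : R) ∉ p := by simpa [p, I, TwoSidedIdeal.mem_comap] using hP.one_notMem
  have hep : e ∈ p • (⊤ : Submodule R A) :=
    Module.Projective.mem_smul_top_of_forall_dual_apply_mem fun φ => by
      simpa [p, TwoSidedIdeal.mem_comap] using
        I.apply_mem_of_surjective_mulLeftRight hsurj (Algebra.linearMap R A ∘ₗ φ)
          (by simpa [I] using heP)
  obtain ⟨r, hr1, hre⟩ := IsIdempotentElem.exists_sub_one_mem_and_smul_eq_zero he hep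
  have hr : r ≠ 0 := by
    rintro rfl
    exact hp (by simpa using p.neg_mem hr1)
  exact he0 ((smul_eq_zero.mp hre).resolve_left hr)
end

section
/- Let R be a commutative ring, A an Azumaya algebra over R, B an R-algebra (possibly noncommutative, with R mapping into the center of B), and f : A → B an R-algebra homomorphism such that B is generated as a ring by f(A) together with the centralizer C = {b ∈ B | f(a)·b = b·f(a) for all a ∈ A}. Then the R-linear map A ⊗_R C → B induced by a ⊗ c ↦ f(a)·c is bijective; in particular B is isomorphic to A ⊗_R C as a ring. -/
/-!
Since `A ⊗ Aᵐᵒᵖ ≅ End_R(A)`, a finite dual basis `(aᵢ, φᵢ)` of the projective module `A` yields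
elements `uᵢ ∈ A ⊗ Aᵐᵒᵖ` acting on `A` as `x ↦ φᵢ(x) • 1`. Acting on `B` through `f`, each `uᵢ`
maps `B` into the centralizer `C`, because `(x ⊗ 1) uᵢ = (1 ⊗ x) uᵢ`. Then
`b ↦ ∑ aᵢ ⊗ uᵢ • b` is a two-sided inverse of `a ⊗ c ↦ f(a) c`: one composite is the identity by
`∑ (aᵢ ⊗ 1) uᵢ = 1`, the other by `uᵢ • (f(x) c) = φᵢ(x) c`.
-/

open scoped TensorProduct

/-- `A` is an Azumaya algebra over the commutative ring `R`: it is a finitely generated,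
projective and faithful `R`-module and the natural map `A ⊗[R] Aᵐᵒᵖ → End_R(A)`,
`a ⊗ b ↦ (x ↦ a * x * b)`, is bijective. -/
def IsAzumayaAlgebra (R A : Type*) [CommRing R] [Ring A] [Algebra R A] : Prop :=
  Module.Finite R A ∧ Module.Projective R A ∧ FaithfulSMul R A ∧
    Function.Bijective (mulLeftRight R A)

theorem Module.Finite.exists_dual_basis_of_projective (R M : Type*) [CommSemiring R]
    [AddCommMonoid M] [Module R M] [Module.Finite R M] [Module.Projective R M] :
    ∃ (n : ℕ) (a : Fin n → M) (φ : Fin n → Module.Dual R M), ∀ x, ∑ i, φ i x • a i = x := by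
  obtain ⟨n, π, s, -, -, hπs⟩ := Module.Finite.exists_comp_eq_id_of_projective R M
  refine ⟨n, fun i => π (Pi.single i 1), fun i => LinearMap.proj i ∘ₗ s, fun x => ?_⟩
  calc ∑ i, s x i • π (Pi.single i 1) = π (∑ i, s x i • Pi.single i 1) := by simp [map_sum]
    _ = (π ∘ₗ s) x := by rw [LinearMap.comp_apply]; congr 1; ext j; simp [Pi.single_apply]
    _ = x := by rw [hπs, LinearMap.id_apply]

theorem mulLeftRight_eq_toLinearMap (R A : Type*) [CommRing R] [Ring A] [Algebra R A] :
    mulLeftRight R A = (AlgHom.mulLeftRight R A).toLinearMap := by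
  ext a b x
  simp [mulLeftRight]

theorem IsAzumayaAlgebra.isAzumaya {R A : Type*} [CommRing R] [Ring A] [Algebra R A]
    (h : IsAzumayaAlgebra R A) : IsAzumaya R A :=
  have ⟨_, _, _, hbij⟩ := h
  { bij := by rwa [mulLeftRight_eq_toLinearMap] at hbij }

section Sandwich

variable {R A B : Type*} [CommSemiring R] [Semiring A] [Algebra R A] [Semiring B] [Algebra R B]
  (f : A →ₐ[R] B)

noncomputable def AlgHom.sandwich : A ⊗[R] Aᵐᵒᵖ →ₐ[R] Module.End R B :=
  (AlgHom.mulLeftRight R B).comp (Algebra.TensorProduct.map f (AlgHom.op f))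

@[simp]
theorem AlgHom.sandwich_tmul_apply (a : A) (b : Aᵐᵒᵖ) (x : B) :
    f.sandwich (a ⊗ₜ b) x = f a * x * f b.unop := by
  simp [AlgHom.sandwich]

theorem AlgHom.sandwich_apply_map (u : A ⊗[R] Aᵐᵒᵖ) (x : A) :
    f.sandwich u (f x) = f (AlgHom.mulLeftRight R A u x) := by
  induction u using TensorProduct.induction_on with
  | zero => simp
  | tmul a b => simp
  | add u v hu hv => simp [hu, hv]

theorem AlgHom.sandwich_apply_mul_of_mem_centralizer (u : A ⊗[R] Aᵐᵒᵖ) (b : B) {c : B}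
    (hc : c ∈ Set.centralizer (Set.range f)) :
    f.sandwich u (b * c) = f.sandwich u b * c := by
  induction u using TensorProduct.induction_on with
  | zero => simp
  | tmul a d => simp [mul_assoc, hc (f d.unop) ⟨d.unop, rfl⟩]
  | add u v hu hv => simp [hu, hv, add_mul]

theorem AlgHom.sandwich_mem_centralizer {u : A ⊗[R] Aᵐᵒᵖ}
    (hu : ∀ x : A, (x ⊗ₜ 1) * u = (1 ⊗ₜ MulOpposite.op x) * u) (b : B) :
    f.sandwich u b ∈ Subalgebra.centralizer R (Set.range f) := by
  rintro _ ⟨x, rfl⟩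
  have hl : f x * f.sandwich u b = f.sandwich ((x ⊗ₜ 1) * u) b := by simp
  have hr : f.sandwich u b * f x = f.sandwich ((1 ⊗ₜ MulOpposite.op x) * u) b := by simp
  rw [hl, hr, hu]

noncomputable def AlgHom.tensorCentralizerLift :
    A ⊗[R] Subalgebra.centralizer R (Set.range f) →ₐ[R] B :=
  Algebra.TensorProduct.lift f (Subalgebra.centralizer R (Set.range f)).val
    (fun a c => c.2 (f a) ⟨a, rfl⟩)

@[simp]
theorem AlgHom.tensorCentralizerLift_tmul (a : A) (c : Subalgebra.centralizer R (Set.range f)) :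
    f.tensorCentralizerLift (a ⊗ₜ c) = f a * c :=
  Algebra.TensorProduct.lift_tmul ..

end Sandwich

namespace IsAzumaya

variable {R A B : Type*} [CommSemiring R] [Semiring A] [Algebra R A] [IsAzumaya R A]

noncomputable def tensorOfDual (φ : Module.Dual R A) : A ⊗[R] Aᵐᵒᵖ :=
  (AlgEquiv.ofBijective _ (bij (R := R) (A := A))).symm (φ.smulRight 1)

@[simp]
theorem mulLeftRight_tensorOfDual (φ : Module.Dual R A) (x : A) :
    AlgHom.mulLeftRight R A (tensorOfDual φ) x = φ x • 1 :=
  LinearMap.congr_fun ((AlgEquiv.ofBijective _ bij).apply_symm_apply (φ.smulRight 1)) x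

theorem tmul_one_mul_tensorOfDual (φ : Module.Dual R A) (x : A) :
    (x ⊗ₜ 1) * tensorOfDual φ = (1 ⊗ₜ MulOpposite.op x) * tensorOfDual φ := by
  apply (bij (R := R) (A := A)).injective
  ext y
  simp

theorem sum_tmul_one_mul_tensorOfDual {ι : Type*} [Fintype ι] {a : ι → A}
    {φ : ι → Module.Dual R A} (hdual : ∀ x, ∑ i, φ i x • a i = x) :
    ∑ i, (a i ⊗ₜ 1) * tensorOfDual (φ i) = 1 := by
  apply (bij (R := R) (A := A)).injective
  ext x
  simp [hdual]

variable [Semiring B] [Algebra R B] (f : A →ₐ[R] B)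

noncomputable def centralizerProj (φ : Module.Dual R A) :
    B →ₗ[R] Subalgebra.centralizer R (Set.range f) where
  toFun b := ⟨f.sandwich (tensorOfDual φ) b,
    f.sandwich_mem_centralizer (tmul_one_mul_tensorOfDual φ) b⟩
  map_add' _ _ := Subtype.ext (map_add _ _ _)
  map_smul' _ _ := Subtype.ext (map_smul _ _ _)

theorem centralizerProj_map_mul (φ : Module.Dual R A) (x : A)
    (c : Subalgebra.centralizer R (Set.range f)) :
    centralizerProj f φ (f x * c) = φ x • c := by
  ext
  simp [centralizerProj, f.sandwich_apply_mul_of_mem_centralizer _ _ c.2, f.sandwich_apply_map]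

variable {ι : Type*} [Fintype ι] {a : ι → A} {φ : ι → Module.Dual R A}

noncomputable def tensorCentralizerInv (a : ι → A) (φ : ι → Module.Dual R A) :
    B →ₗ[R] A ⊗[R] Subalgebra.centralizer R (Set.range f) :=
  ∑ i, TensorProduct.mk R A _ (a i) ∘ₗ centralizerProj f (φ i)

theorem tensorCentralizerInv_tensorCentralizerLift (hdual : ∀ x, ∑ i, φ i x • a i = x)
    (z : A ⊗[R] Subalgebra.centralizer R (Set.range f)) :
    tensorCentralizerInv f a φ (f.tensorCentralizerLift z) = z := by
  induction z using TensorProduct.induction_on with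
  | zero => simp
  | tmul x c =>
    simp only [tensorCentralizerInv, AlgHom.tensorCentralizerLift_tmul, LinearMap.coe_sum,
      LinearMap.coe_comp, Finset.sum_apply, Function.comp_apply, centralizerProj_map_mul,
      TensorProduct.mk_apply]
    simp_rw [← TensorProduct.smul_tmul, ← TensorProduct.sum_tmul, hdual]
  | add z w hz hw => simp [hz, hw]

theorem tensorCentralizerLift_tensorCentralizerInv (hdual : ∀ x, ∑ i, φ i x • a i = x) (b : B) :
    f.tensorCentralizerLift (tensorCentralizerInv f a φ b) = b :=
  calc _ = (∑ i, f.sandwich ((a i ⊗ₜ 1) * tensorOfDual (φ i))) b := by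
        simp [tensorCentralizerInv, centralizerProj]
    _ = b := by rw [← map_sum, sum_tmul_one_mul_tensorOfDual hdual, map_one, Module.End.one_apply]

theorem bijective_tensorCentralizerLift : Function.Bijective f.tensorCentralizerLift := by
  obtain ⟨n, a, φ, hdual⟩ := Module.Finite.exists_dual_basis_of_projective R A
  exact Function.bijective_iff_has_inverse.mpr ⟨tensorCentralizerInv f a φ,
    tensorCentralizerInv_tensorCentralizerLift f hdual,
    tensorCentralizerLift_tensorCentralizerInv f hdual⟩

end IsAzumaya

/-- Let `A` be an Azumaya algebra over a commutative ring `R`, let `B` be an `R`-algebra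
and `f : A →ₐ[R] B` an `R`-algebra homomorphism such that `B` is generated as a ring by
`f(A)` together with the centralizer `C` of `f(A)` in `B`. Then the canonical map
`A ⊗[R] C → B`, `a ⊗ c ↦ f(a) * c`, is bijective. -/
theorem azumaya_tensor_centralizer_bijective {R A B : Type*} [CommRing R]
    [Ring A] [Algebra R A] [Ring B] [Algebra R B]
    (hAz : IsAzumayaAlgebra R A) (f : A →ₐ[R] B) :
    Function.Bijective
      (Algebra.TensorProduct.lift f (Subalgebra.centralizer R (Set.range f)).val
        (fun a c => by exact (Subalgebra.mem_centralizer_iff R).mp c.2 (f a) ⟨a, rfl⟩)) :=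
  haveI := hAz.isAzumaya
  IsAzumaya.bijective_tensorCentralizerLift f
end

section
/- Let R be a commutative ring and A an R-algebra that is generated by n elements as an R-module. Let k be a field, r a natural number, and suppose there exists a surjective ring homomorphism from A onto the matrix ring M_r(k) of r×r matrices over k. Then r² ≤ n. -/
/-!
A surjection `φ : A → M_r(k)` carries the centre of `A`, in particular the image of `R`, into the
centre of `M_r(k)`, which consists of the scalars `k`. Hence `φ` turns `R`-linear combinations into
`k`-linear combinations, so the images of the `n` generators span `M_r(k)` over `k`, and
`r² = dim_k M_r(k) ≤ n`.
-/

open Function Submodule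

theorem Algebra.IsCentral.exists_map_algebraMap_eq {R A B : Type*} [CommSemiring R]
    [Semiring A] [Algebra R A] (k : Type*) [CommSemiring k] [Semiring B] [Algebra k B]
    [Algebra.IsCentral k B] {φ : A →+* B} (hφ : Surjective φ) (c : R) :
    ∃ μ : k, φ (algebraMap R A c) = algebraMap k B μ := by
  rw [← Algebra.IsCentral.mem_center_iff k, Subalgebra.mem_center_iff]
  intro b
  obtain ⟨a, rfl⟩ := hφ b
  rw [← map_mul, ← map_mul, Algebra.commutes]

theorem Submodule.span_range_comp_eq_top_of_surjective {R A k B ι : Type*} [CommSemiring R]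
    [Semiring A] [Algebra R A] [CommSemiring k] [Semiring B] [Algebra k B]
    [Algebra.IsCentral k B] {φ : A →+* B} (hφ : Surjective φ) {s : ι → A}
    (hs : span R (Set.range s) = ⊤) : span k (Set.range (φ ∘ s)) = ⊤ := by
  set V := span k (Set.range (φ ∘ s))
  let P : Submodule R A :=
    { carrier := φ ⁻¹' V
      add_mem' := fun ha hb => by
        simpa only [Set.mem_preimage, SetLike.mem_coe, map_add] using V.add_mem ha hb
      zero_mem' := by simpa only [Set.mem_preimage, SetLike.mem_coe, map_zero] using V.zero_mem
      smul_mem' := fun c a ha => by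
        obtain ⟨μ, hμ⟩ := Algebra.IsCentral.exists_map_algebraMap_eq k hφ c
        rw [Set.mem_preimage, Algebra.smul_def, map_mul, hμ, ← Algebra.smul_def]
        exact V.smul_mem μ ha }
  have hP : P = ⊤ := top_le_iff.mp <| hs ▸ span_le.mpr <| by
    rintro _ ⟨i, rfl⟩
    exact subset_span ⟨i, rfl⟩
  refine eq_top_iff.mpr fun M _ => ?_
  obtain ⟨a, rfl⟩ := hφ M
  exact hP.ge (mem_top (x := a))

/-- Let `R` be a commutative ring and `A` an `R`-algebra generated by `n` elements as an
`R`-module. If there is a surjective ring homomorphism from `A` onto the matrix ring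
`M_r(k)` over a field `k`, then `r² ≤ n`. -/
theorem sq_le_of_surjective_onto_matrix {R A k : Type*} [CommRing R] [Ring A]
    [Algebra R A] [Field k] {n : ℕ} (s : Fin n → A)
    (hs : Submodule.span R (Set.range s) = ⊤)
    (r : ℕ) (φ : A →+* Matrix (Fin r) (Fin r) k) (hφ : Function.Surjective φ) :
    r ^ 2 ≤ n := by
  have hspan := span_range_comp_eq_top_of_surjective (k := k) hφ hs
  simpa [Module.finrank_matrix, sq] using finrank_le_of_span_eq_top hspan
end

section
/- Let k be a field of characteristic 3. Then the group algebra k[S₃] of the symmetric group S₃ on three letters has exactly two prime two-sided ideals. -/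
/-!
The augmentation `ε` and the sign character `σ` map `k[S₃]` onto `k`, so their kernels are
maximal and prime. Conversely, let `c` be a 3-cycle, `t` a transposition and `δ = c - 1`.
Modulo the left ideal `k[S₃]δ` every permutation is congruent to `1` or to `t` according to its sign, so, since
`2` is invertible, `J = ker ε ∩ ker σ` lies in `k[S₃]δ`. In characteristic 3 we have
`δ³ = c³ - 1 = 0`, hence `a x a y a = 0` for all `a ∈ J`, which puts `J` inside every prime `P`.
Finally `(t - 1) x (-(1 + t)) ∈ J` for all `x`, so `P` contains `-(1 + t)` or `t - 1`, and then
`P` contains, hence equals, `ker σ` or `ker ε` respectively.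
-/

open Function

namespace IsPrimeTwoSidedIdeal

variable {B : Type*} [Ring B] {P : Set B}

theorem add_mem (hP : IsPrimeTwoSidedIdeal P) {a b : B} (ha : a ∈ P) (hb : b ∈ P) :
    a + b ∈ P :=
  hP.1.2.1 a ha b hb

theorem mul_mem_left (hP : IsPrimeTwoSidedIdeal P) (x : B) {a : B} (ha : a ∈ P) : x * a ∈ P :=
  hP.1.2.2.1 x a ha

theorem mul_mem_right (hP : IsPrimeTwoSidedIdeal P) (x : B) {a : B} (ha : a ∈ P) : a * x ∈ P :=
  hP.1.2.2.2 x a ha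

theorem one_notMem_s18 (hP : IsPrimeTwoSidedIdeal P) : (1 : B) ∉ P := fun h =>
  hP.2.1 <| Set.eq_univ_of_forall fun x => by simpa using hP.mul_mem_right x h

theorem sub_mem (hP : IsPrimeTwoSidedIdeal P) {a b : B} (ha : a ∈ P) (hb : b ∈ P) :
    a - b ∈ P := by
  simpa [sub_eq_add_neg] using hP.add_mem ha (hP.mul_mem_right (-1) hb)

theorem mem_of_forall_mul_mul_mul_mul_eq_zero (hP : IsPrimeTwoSidedIdeal P) {a : B}
    (ha : ∀ x y, a * x * a * y * a = 0) : a ∈ P := by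
  obtain ⟨⟨hzero, -, -, -⟩, -, hprime⟩ := hP
  by_contra h
  have haxa : ∀ x, a * x * a ∈ P := fun x =>
    (hprime (a * x * a) a fun y => (ha x y).symm ▸ hzero).resolve_right h
  exact h ((hprime a a haxa).elim id id)

theorem subset_of_subset_span_pow_three_eq_zero (hP : IsPrimeTwoSidedIdeal P) {J : Set B}
    (hJ : ∀ a ∈ J, ∀ x, a * x ∈ J) {d : B} (hd : d ^ 3 = 0) (hJd : J ⊆ Ideal.span {d}) :
    J ⊆ P := by
  have hfactor : ∀ a ∈ J, ∃ u, a = u * d := fun a ha =>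
    (Ideal.mem_span_singleton'.1 (hJd ha)).imp fun _ h => h.symm
  refine fun a ha => hP.mem_of_forall_mul_mul_mul_mul_eq_zero fun x y => ?_
  obtain ⟨a₁, rfl⟩ := hfactor a ha
  obtain ⟨a₂, ha₂⟩ := hfactor _ (hJ _ ha (y * a₁))
  obtain ⟨a₃, ha₃⟩ := hfactor _ (hJ _ ha (x * a₂))
  calc a₁ * d * x * (a₁ * d) * y * (a₁ * d)
      = a₁ * d * x * (a₁ * d * (y * a₁)) * d := by noncomm_ring
    _ = a₁ * d * (x * a₂) * d * d := by rw [ha₂]; noncomm_ring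
    _ = a₃ * d ^ 3 := by rw [ha₃]; noncomm_ring
    _ = 0 := by rw [hd, mul_zero]

variable {D F : Type*} [FunLike F B D]

theorem _root_.RingHom.isPrimeTwoSidedIdeal_ker [Ring D] [IsDomain D] [RingHomClass F B D]
    (f : F) : IsPrimeTwoSidedIdeal (RingHom.ker f : Set B) := by
  refine ⟨⟨(RingHom.ker f).zero_mem, fun a ha b hb => (RingHom.ker f).add_mem ha hb,
    fun x a ha => ?_, fun x a ha => ?_⟩, fun h => ?_, fun a b hab => ?_⟩
  · simp_all [RingHom.mem_ker]
  · simp_all [RingHom.mem_ker]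
  · have h1 : (1 : B) ∈ (RingHom.ker f : Set B) := h ▸ Set.mem_univ _
    simp [RingHom.mem_ker] at h1
  · simpa [RingHom.mem_ker] using hab 1

theorem ker_subset_of_mem [Ring D] [RingHomClass F B D] {φ ψ : F} (hP : IsPrimeTwoSidedIdeal P)
    (hJ : (RingHom.ker φ : Set B) ∩ RingHom.ker ψ ⊆ P) {e : B} (he : e ∈ P)
    (hφe : φ e = 1) (hψe : ψ e = 0) : (RingHom.ker ψ : Set B) ⊆ P := fun x hx => by
  have hxe : x - x * e ∈ P := hJ ⟨by simp [RingHom.mem_ker, hφe], by simp_all [RingHom.mem_ker]⟩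
  simpa using hP.add_mem hxe (hP.mul_mem_left x he)

variable [DivisionRing D] [RingHomClass F B D] {φ ψ : F}

theorem eq_ker_of_ker_subset (hφ : Surjective φ) (hP : IsPrimeTwoSidedIdeal P)
    (h : (RingHom.ker φ : Set B) ⊆ P) : P = RingHom.ker φ := by
  refine Set.Subset.antisymm (fun y hy => ?_) h
  by_contra hφy
  obtain ⟨s, hs⟩ := hφ (φ y)⁻¹
  have hsy : s * y - 1 ∈ P := h <| by simp [RingHom.mem_ker, hs, inv_mul_cancel₀ hφy]
  exact hP.one_notMem_s18 (by simpa using hP.sub_mem (hP.mul_mem_left s hy) hsy)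

theorem eq_ker_or_eq_ker (hφ : Surjective φ) (hψ : Surjective ψ) (hP : IsPrimeTwoSidedIdeal P)
    (hJ : (RingHom.ker φ : Set B) ∩ RingHom.ker ψ ⊆ P) {e₁ e₂ : B}
    (he₁ : φ e₁ = 1 ∧ ψ e₁ = 0) (he₂ : φ e₂ = 0 ∧ ψ e₂ = 1) :
    P = RingHom.ker φ ∨ P = RingHom.ker ψ := by
  have he : e₂ ∈ P ∨ e₁ ∈ P := hP.2.2 e₂ e₁ fun x =>
    hJ ⟨by simp [RingHom.mem_ker, he₂.1], by simp [RingHom.mem_ker, he₁.2]⟩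
  rcases he with he | he
  · exact .inl <| hP.eq_ker_of_ker_subset hφ <|
      hP.ker_subset_of_mem (Set.inter_comm (α := B) _ _ ▸ hJ) he he₂.2 he₂.1
  · exact .inr <| hP.eq_ker_of_ker_subset hψ <| hP.ker_subset_of_mem hJ he he₁.1 he₁.2

end IsPrimeTwoSidedIdeal

theorem encard_setOf_isPrimeTwoSidedIdeal_eq_two {B D F : Type*} [Ring B] [DivisionRing D]
    [FunLike F B D] [RingHomClass F B D] {φ ψ : F} (hφ : Surjective φ) (hψ : Surjective ψ)
    (hJ : ∀ P : Set B, IsPrimeTwoSidedIdeal P → (RingHom.ker φ : Set B) ∩ RingHom.ker ψ ⊆ P)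
    {e₁ e₂ : B} (he₁ : φ e₁ = 1 ∧ ψ e₁ = 0) (he₂ : φ e₂ = 0 ∧ ψ e₂ = 1) :
    {P : Set B | IsPrimeTwoSidedIdeal P}.encard = 2 := by
  have hprimes :
      {P : Set B | IsPrimeTwoSidedIdeal P} = {↑(RingHom.ker φ), ↑(RingHom.ker ψ)} := by
    ext P
    refine ⟨fun hP => hP.eq_ker_or_eq_ker hφ hψ (hJ P hP) he₁ he₂, ?_⟩
    rintro (rfl | rfl) <;> exact RingHom.isPrimeTwoSidedIdeal_ker _
  have hne : (RingHom.ker φ : Set B) ≠ RingHom.ker ψ := fun h => by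
    have he₂ψ : e₂ ∈ (RingHom.ker ψ : Set B) := h ▸ he₂.1
    simp [RingHom.mem_ker, he₂.2] at he₂ψ
  rw [hprimes, Set.encard_pair hne]

theorem CharP.neg_two_eq_one {R : Type*} [CommRing R] [CharP R 3] : (-2 : R) = 1 := by
  linear_combination -(CharP.cast_eq_zero R 3 : ((3 : ℕ) : R) = 0)

namespace MonoidAlgebra

variable {k M : Type*} [Monoid M]

theorem of_pow_sub_one_mem_span [CommRing k] (c : M) (n : ℕ) :
    of k M (c ^ n) - 1 ∈ Ideal.span {of k M c - 1} := by
  induction n with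
  | zero => rw [pow_zero, map_one, sub_self]; exact zero_mem _
  | succ n ih =>
    have h : of k M (c ^ (n + 1)) - 1
        = (of k M (c ^ n) - 1) + of k M (c ^ n) * (of k M c - 1) := by
      rw [pow_succ, map_mul]; noncomm_ring
    rw [h]
    exact add_mem ih (Ideal.mul_mem_left _ _ (Ideal.subset_span rfl))

theorem of_sub_one_pow_char [Field k] (p : ℕ) [Fact p.Prime] [CharP k p] {c : M}
    (hc : c ^ p = 1) : (of k M c - 1) ^ p = 0 := by
  have : CharP (MonoidAlgebra k M) p := charP_of_injective_algebraMap (algebraMap k _).injective p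
  rw [sub_pow_char_of_commute _ (Commute.one_right _), ← map_pow, hc, map_one, one_pow, sub_self]

end MonoidAlgebra

namespace PermFinThree

open MonoidAlgebra Equiv Equiv.Perm

local notation "S₃" => Perm (Fin 3)

def cyc : S₃ := finRotate 3

def tr : S₃ := swap 0 1

theorem cyc_pow_three : cyc ^ 3 = 1 := by decide

theorem sign_tr : sign tr = -1 := by decide

theorem eq_cyc_pow_or_eq_tr_mul_cyc_pow (g : S₃) :
    (sign g = 1 ∧ ∃ n < 3, cyc ^ n = g) ∨ (sign g = -1 ∧ ∃ n < 3, tr * cyc ^ n = g) := by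
  revert g; decide

variable (k : Type*) [Field k]

noncomputable def augmentation : MonoidAlgebra k S₃ →ₐ[k] k := lift k k S₃ 1

noncomputable def signAlgHom : MonoidAlgebra k S₃ →ₐ[k] k :=
  lift k k S₃ ((Int.castRingHom k : ℤ →* k).comp ((Units.coeHom ℤ).comp sign))

variable {k}

theorem augmentation_of (g : S₃) : augmentation k (of k S₃ g) = 1 := by
  simp [augmentation]

theorem signAlgHom_of (g : S₃) : signAlgHom k (of k S₃ g) = (sign g : ℤ) := by
  simp [signAlgHom]

theorem two_smul_sub_mem_span (a : MonoidAlgebra k S₃) :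
    (2 : k) • a - (augmentation k a + signAlgHom k a) • 1
      - (augmentation k a - signAlgHom k a) • of k S₃ tr ∈ Ideal.span {of k S₃ cyc - 1} := by
  induction a using MonoidAlgebra.induction_on with
  | of g =>
    rcases eq_cyc_pow_or_eq_tr_mul_cyc_pow g with ⟨hg, n, -, rfl⟩ | ⟨hg, n, -, rfl⟩
    · convert Submodule.smul_of_tower_mem _ (2 : k) (of_pow_sub_one_mem_span (k := k) cyc n)
        using 1
      simp only [augmentation_of, signAlgHom_of, hg, Units.val_one, Int.cast_one]
      module
    · convert Submodule.smul_of_tower_mem _ (2 : k) (Ideal.mul_mem_left _ (of k S₃ tr)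
        (of_pow_sub_one_mem_span (k := k) cyc n)) using 1
      rw [augmentation_of, signAlgHom_of, hg, map_mul, mul_sub, mul_one]
      simp only [Units.val_neg, Units.val_one, Int.cast_neg, Int.cast_one]
      module
  | add x y hx hy =>
    convert add_mem hx hy using 1
    simp only [map_add]
    module
  | smul r x hx =>
    convert Submodule.smul_of_tower_mem _ r hx using 1
    simp only [map_smul, smul_eq_mul]
    module

theorem ker_inter_ker_subset_span [CharP k 3] :
    (RingHom.ker (augmentation k) : Set (MonoidAlgebra k S₃)) ∩ RingHom.ker (signAlgHom k)
      ⊆ Ideal.span {of k S₃ cyc - 1} := by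
  rintro a ⟨hε, hσ⟩
  rw [SetLike.mem_coe, RingHom.mem_ker] at hε hσ
  have h2 : (2 : k) ≠ 0 := fun h => by simpa [h] using CharP.neg_two_eq_one (R := k)
  have h2a := Submodule.smul_of_tower_mem _ (2 : k)⁻¹ (two_smul_sub_mem_span a)
  simpa only [SetLike.mem_coe, hε, hσ, add_zero, sub_zero, zero_smul, smul_smul,
    inv_mul_cancel₀ h2, one_smul] using h2a

end PermFinThree

/-- If `k` is a field of characteristic `3`, then the group algebra `k[S₃]` of the
symmetric group on three letters has exactly two prime two-sided ideals. -/
theorem two_primes_of_groupAlgebra_S3 (k : Type*) [Field k] [CharP k 3] :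
    {P : Set (MonoidAlgebra k (Equiv.Perm (Fin 3))) | IsPrimeTwoSidedIdeal P}.encard
      = 2 := by
  open PermFinThree MonoidAlgebra in
  have hsurj (φ : MonoidAlgebra k (Equiv.Perm (Fin 3)) →ₐ[k] k) : Surjective φ :=
    fun r => ⟨algebraMap k _ r, φ.commutes r⟩
  refine encard_setOf_isPrimeTwoSidedIdeal_eq_two (hsurj _) (hsurj _)
    (fun P hP => hP.subset_of_subset_span_pow_three_eq_zero ?_
      (of_sub_one_pow_char 3 cyc_pow_three) ker_inter_ker_subset_span)
    (e₁ := -(1 + of k _ tr)) (e₂ := of k _ tr - 1) ⟨?_, ?_⟩ ⟨?_, ?_⟩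
  · rintro a ⟨hε, hσ⟩ x
    simp_all [RingHom.mem_ker]
  all_goals
    simp only [map_neg, map_add, map_sub, map_one, augmentation_of, signAlgHom_of, sign_tr]
    norm_num
  all_goals exact CharP.neg_two_eq_one
end

section
/- Let R be a commutative ring in which 2 is invertible, and let G be the infinite dihedral group, generated by elements α and β subject to the relations α² = 1 and αβα⁻¹ = β⁻¹. Then the center of the group algebra R[G] is a polynomial ring over R generated by T = β + β⁻¹; precisely, the R-algebra homomorphism from the polynomial ring R[X] to R[G] sending X to β + β⁻¹ is injective and its image equals the center of R[G]. -/
/-- The element `T = β + β⁻¹` of the group algebra `R[G]` of the infinite dihedral group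
`G = ⟨α, β | α² = 1, αβα⁻¹ = β⁻¹⟩` (realized as `DihedralGroup 0`, with `β = r 1`). -/
noncomputable def dihedralT (R : Type*) [CommRing R] :
    MonoidAlgebra R (DihedralGroup 0) :=
  MonoidAlgebra.of R (DihedralGroup 0) (DihedralGroup.r 1) +
    MonoidAlgebra.of R (DihedralGroup 0) (DihedralGroup.r 1)⁻¹

/-!
Let `g` be an element of infinite order of a group `G` and `T = g + g⁻¹ ∈ k[G]`. The coefficient
of `g ^ natDegree p` in `p(T)` is the leading coefficient of `p`, so `p ↦ p(T)` is injective.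
The rescaled Chebyshev polynomials satisfy `Cₙ(T) = gⁿ + g⁻ⁿ`, so an element of `k[G]` supported
on the powers of `g` with coefficients symmetric under `n ↦ -n` is a polynomial in `T`: subtract
`cₙ Cₙ(T)` for the largest `|n|` in the support and induct.

For the infinite dihedral group and `g = β`, a central element of `k[G]` has coefficients
constant on conjugacy classes. The reflections `αβⁱ` have infinite conjugacy classes, so their
coefficients vanish, and `α` conjugates `βⁿ` to `β⁻ⁿ`, which gives the symmetry. Conversely `T`
commutes with `α` and `β`, hence is central.
-/

open Polynomial MonoidAlgebra DihedralGroup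

theorem Polynomial.Chebyshev.aeval_C_units_add_inv {R A : Type*} [CommRing R] [Ring A]
    [Algebra R A] (u : Aˣ) (n : ℤ) :
    aeval (u + u⁻¹ : A) (C R n) = ↑(u ^ n) + ↑(u ^ (-n)) := by
  have add_inv_mul (m : ℤ) : (u + u⁻¹ : A) * ↑(u ^ m) = ↑(u ^ (m + 1)) + ↑(u ^ (m - 1)) := by
    rw [add_mul, ← Units.val_mul, ← Units.val_mul]
    congr 2 <;> group
  induction n using Polynomial.Chebyshev.induct' with
  | zero => simp [map_ofNat, one_add_one_eq_two]
  | one => simp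
  | add_two n ih1 ih0 =>
    rw [C_add_two, map_sub, map_mul, aeval_X, ih1, ih0, mul_add, add_inv_mul, add_inv_mul,
      show (n : ℤ) + 1 + 1 = n + 2 by ring, show (n : ℤ) + 1 - 1 = n by ring,
      show -((n : ℤ) + 1) + 1 = -n by ring, show -((n : ℤ) + 1) - 1 = -(n + 2) by ring]
    abel
  | neg n ih => rw [C_neg, ih, neg_neg, add_comm]

namespace MonoidAlgebra

section Center

variable {k G : Type*} [Semiring k] [Group G] {x : MonoidAlgebra k G}

theorem coeff_eq_of_isConj (hx : x ∈ Set.center (MonoidAlgebra k G)) {g g' : G}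
    (hgg' : IsConj g g') : x.coeff g' = x.coeff g := by
  obtain ⟨h, rfl⟩ := isConj_iff.mp hgg'
  simpa [mul_assoc] using
    congrArg (fun y ↦ y.coeff (h * g)) (Semigroup.mem_center_iff.mp hx (single h 1)).symm

theorem coeff_eq_zero_of_mem_center (hx : x ∈ Set.center (MonoidAlgebra k G)) {g : G}
    (hg : (conjugatesOf g).Infinite) : x.coeff g = 0 := by
  by_contra hne
  exact hg (x.coeff.hasFiniteSupport.subset fun c hc ↦ by
    rwa [Function.mem_support, coeff_eq_of_isConj hx hc])

end Center

section Powers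

variable {k G : Type*} [CommSemiring k] [Group G] {g : G}

theorem coeff_mul_of_add_of_inv (x : MonoidAlgebra k G) (h : G) :
    (x * (of k G g + of k G g⁻¹)).coeff h = x.coeff (h * g⁻¹) + x.coeff (h * g) := by
  simp [mul_add]

theorem coeff_pow_of_add_of_inv_zpow_eq_zero (hg : ¬IsOfFinOrder g) {n : ℕ} {j : ℤ}
    (hj : n < j) : ((of k G g + of k G g⁻¹) ^ n).coeff (g ^ j) = 0 := by
  induction n generalizing j with
  | zero =>
    have : g ^ j ≠ 1 := fun h ↦
      hj.ne' (injective_zpow_iff_not_isOfFinOrder.mpr hg (h.trans (zpow_zero g).symm))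
    simp [one_def, this.symm]
  | succ n ih =>
    rw [pow_succ, coeff_mul_of_add_of_inv, ← zpow_sub_one, ← zpow_add_one, ih (by omega),
      ih (by omega), add_zero]

theorem coeff_pow_of_add_of_inv_zpow_self (hg : ¬IsOfFinOrder g) (n : ℕ) :
    ((of k G g + of k G g⁻¹) ^ n).coeff (g ^ (n : ℤ)) = 1 := by
  induction n with
  | zero => simp
  | succ n ih =>
    rw [pow_succ, coeff_mul_of_add_of_inv, ← zpow_sub_one, ← zpow_add_one, Nat.cast_succ,
      add_sub_cancel_right, ih, coeff_pow_of_add_of_inv_zpow_eq_zero hg (by omega), add_zero]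

theorem coeff_aeval_of_add_of_inv_zpow_natDegree (hg : ¬IsOfFinOrder g) (p : k[X]) :
    (aeval (of k G g + of k G g⁻¹) p).coeff (g ^ (p.natDegree : ℤ)) = p.leadingCoeff := by
  rw [aeval_eq_sum_range, coeff_sum, Finsupp.finsetSum_apply,
    Finset.sum_eq_single_of_mem _ (Finset.self_mem_range_succ _)]
  · rw [coeff_smul_apply, coeff_pow_of_add_of_inv_zpow_self hg, smul_eq_mul, mul_one,
      leadingCoeff]
  · intro i hi _
    have : (i : ℤ) < p.natDegree := by have := Finset.mem_range.mp hi; omega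
    rw [coeff_smul_apply, coeff_pow_of_add_of_inv_zpow_eq_zero hg this, smul_zero]

theorem exists_coeff_zpow_eq_zero_of_lt_natAbs (hg : ¬IsOfFinOrder g) (x : MonoidAlgebra k G) :
    ∃ N : ℕ, ∀ j : ℤ, N < j.natAbs → x.coeff (g ^ j) = 0 := by
  obtain ⟨N, hN⟩ := ((x.coeff.hasFiniteSupport.preimage
    (injective_zpow_iff_not_isOfFinOrder.mpr hg).injOn).image Int.natAbs).bddAbove
  exact ⟨N, fun j hj ↦ by_contra fun hne ↦ hj.not_ge (hN ⟨j, hne, rfl⟩)⟩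

theorem eq_algebraMap_coeff_one {x : MonoidAlgebra k G}
    (hsupp : Function.support x.coeff ⊆ Set.range (g ^ · : ℤ → G))
    (hzero : ∀ j : ℤ, j ≠ 0 → x.coeff (g ^ j) = 0) :
    x = algebraMap k (MonoidAlgebra k G) (x.coeff 1) := by
  ext h
  by_cases h1 : h = 1
  · simp [h1, coe_algebraMap]
  · rw [coe_algebraMap, Function.comp_apply, coeff_single, Finsupp.single_eq_of_ne h1]
    by_contra hne
    obtain ⟨j, rfl⟩ := hsupp hne
    exact hne (hzero j fun hj ↦ h1 (by simp [hj]))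

end Powers

section Chebyshev

variable {k G : Type*} [CommRing k] [Group G] {g : G}

theorem aeval_of_add_of_inv_injective (hg : ¬IsOfFinOrder g) :
    Function.Injective (aeval (of k G g + of k G g⁻¹) : k[X] →ₐ[k] MonoidAlgebra k G) := by
  refine (injective_iff_map_eq_zero _).mpr fun p hp ↦ leadingCoeff_eq_zero.mp ?_
  rw [← coeff_aeval_of_add_of_inv_zpow_natDegree hg, hp, coeff_zero, Finsupp.zero_apply]

theorem aeval_of_add_of_inv_chebyshevC (n : ℤ) :
    aeval (of k G g + of k G g⁻¹) (Chebyshev.C k n) = of k G (g ^ n) + of k G (g ^ (-n)) := by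
  simpa only [← map_inv, ← map_zpow, MonoidHom.coe_toHomUnits] using
    Chebyshev.aeval_C_units_add_inv (R := k) ((of k G).toHomUnits g) n

theorem coeff_zpow_aeval_of_add_of_inv_chebyshevC (hg : ¬IsOfFinOrder g) (n j : ℤ) :
    (aeval (of k G g + of k G g⁻¹) (Chebyshev.C k n)).coeff (g ^ j) =
      (if n = j then 1 else 0) + (if -n = j then 1 else 0) := by
  classical
  rw [aeval_of_add_of_inv_chebyshevC]
  simp only [of_apply, coeff_add, coeff_single, Finsupp.add_apply, Finsupp.single_apply,
    (injective_zpow_iff_not_isOfFinOrder.mpr hg).eq_iff]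

theorem support_coeff_aeval_of_add_of_inv_chebyshevC_subset (n : ℤ) :
    Function.support (aeval (of k G g + of k G g⁻¹) (Chebyshev.C k n)).coeff ⊆
      Set.range (g ^ · : ℤ → G) := by
  classical
  intro h hh
  by_contra hrange
  have (m : ℤ) : g ^ m ≠ h := fun hm ↦ hrange ⟨m, hm⟩
  rw [Function.mem_support, aeval_of_add_of_inv_chebyshevC] at hh
  simp only [of_apply, coeff_add, coeff_single, Finsupp.add_apply, Finsupp.single_apply, this,
    if_false, add_zero, ne_eq, not_true_eq_false] at hh

theorem mem_range_aeval_of_add_of_inv (hg : ¬IsOfFinOrder g) {x : MonoidAlgebra k G}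
    (hsupp : Function.support x.coeff ⊆ Set.range (g ^ · : ℤ → G))
    (hsymm : ∀ j : ℤ, x.coeff (g ^ (-j)) = x.coeff (g ^ j)) :
    x ∈ (aeval (R := k) (of k G g + of k G g⁻¹)).range := by
  obtain ⟨N, hN⟩ := exists_coeff_zpow_eq_zero_of_lt_natAbs hg x
  induction N generalizing x with
  | zero =>
    rw [eq_algebraMap_coeff_one hsupp fun j hj ↦ hN j (Int.natAbs_pos.mpr hj)]
    exact Subalgebra.algebraMap_mem _ _
  | succ N ih =>
    have hQ := coeff_zpow_aeval_of_add_of_inv_chebyshevC (k := k) hg ((N : ℤ) + 1)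
    set Q := aeval (of k G g + of k G g⁻¹) (Chebyshev.C k ((N : ℤ) + 1))
    set c := x.coeff (g ^ ((N : ℤ) + 1))
    have coeff_sub_smul (h : G) : (x - c • Q).coeff h = x.coeff h - c * Q.coeff h := rfl
    have hQ_mem : Q ∈ (aeval (R := k) (of k G g + of k G g⁻¹)).range := AlgHom.mem_range_self _ _
    suffices x - c • Q ∈ (aeval (R := k) (of k G g + of k G g⁻¹)).range by
      simpa only [sub_add_cancel] using add_mem this (Subalgebra.smul_mem _ hQ_mem c)
    refine ih (fun h hh ↦ ?_) (fun j ↦ ?_) (fun j hj ↦ ?_)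
    · rw [Function.mem_support, coeff_sub_smul] at hh
      by_cases hx : x.coeff h = 0
      · have hQh : Q.coeff h ≠ 0 := fun hQh ↦ hh (by rw [hx, hQh, mul_zero, sub_zero])
        exact support_coeff_aeval_of_add_of_inv_chebyshevC_subset _ hQh
      · exact hsupp hx
    · rw [coeff_sub_smul, coeff_sub_smul, hsymm, hQ, hQ]
      split_ifs <;> first | omega | ring
    · rcases (by omega : j = N + 1 ∨ j = -(N + 1) ∨ N + 1 < j.natAbs) with rfl | rfl | hj
      · rw [coeff_sub_smul, hQ, if_pos rfl, if_neg (by omega)]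
        ring
      · rw [coeff_sub_smul, hQ, hsymm, if_neg (by omega), if_pos rfl]
        ring
      · rw [coeff_sub_smul, hN j hj, hQ, if_neg (by omega), if_neg (by omega)]
        ring

end Chebyshev

end MonoidAlgebra

namespace DihedralGroup

theorem isConj_r_neg {n : ℕ} (i : ZMod n) : IsConj (r i) (r (-i)) :=
  isConj_iff.mpr ⟨sr 0, by simp [sr_mul_r, sr_mul_sr, inv_sr]⟩

theorem infinite_conjugatesOf_sr (i : ZMod 0) : (conjugatesOf (sr i)).Infinite := by
  refine Set.infinite_of_injective_forall_mem (f := fun k : ZMod 0 ↦ r k * sr i * (r k)⁻¹)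
    (fun a b hab ↦ ?_) fun k ↦ isConj_iff.mpr ⟨r k, rfl⟩
  simp only [r_mul_sr, inv_r, sr_mul_r, sr.injEq] at hab
  exact mul_left_cancel₀ two_ne_zero (by linear_combination -hab)

theorem not_isOfFinOrder_r_one : ¬IsOfFinOrder (r 1 : DihedralGroup 0) :=
  orderOf_eq_zero_iff.mp orderOf_r_one

theorem of_r_one_add_of_inv_mem_center (k : Type*) [CommSemiring k] (n : ℕ) :
    of k (DihedralGroup n) (r 1) + of k (DihedralGroup n) (r 1)⁻¹ ∈
      Set.center (MonoidAlgebra k (DihedralGroup n)) := by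
  refine Semigroup.mem_center_iff.mpr fun y ↦ ?_
  induction y using MonoidAlgebra.induction_on with
  | of g =>
    simp only [mul_add, add_mul, ← map_mul]
    rcases g with i | i <;> simp only [inv_r, r_mul_r, r_mul_sr, sr_mul_r]
    · rw [add_comm i, add_comm i]
    · rw [sub_neg_eq_add, ← sub_eq_add_neg, add_comm]
  | add x y hx hy => rw [add_mul, hx, hy, mul_add]
  | smul c x hx => rw [smul_mul_assoc, hx, mul_smul_comm]

theorem support_coeff_subset_range_zpow_of_mem_center {k : Type*} [Semiring k]
    {x : MonoidAlgebra k (DihedralGroup 0)}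
    (hx : x ∈ Set.center (MonoidAlgebra k (DihedralGroup 0))) :
    Function.support x.coeff ⊆ Set.range ((r 1 : DihedralGroup 0) ^ · : ℤ → DihedralGroup 0) := by
  rintro (i | i) hi
  · obtain ⟨j, rfl⟩ := ZMod.intCast_surjective i
    exact ⟨j, r_one_zpow j⟩
  · exact absurd (coeff_eq_zero_of_mem_center hx (infinite_conjugatesOf_sr i)) hi

end DihedralGroup

theorem center_groupAlgebra_infinite_dihedral_general (R : Type*) [CommRing R] :
    Function.Injective
      (Polynomial.aeval (dihedralT R) :
        Polynomial R →ₐ[R] MonoidAlgebra R (DihedralGroup 0)) ∧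
    Set.range
      (Polynomial.aeval (dihedralT R) :
        Polynomial R →ₐ[R] MonoidAlgebra R (DihedralGroup 0)) =
      (Subring.center (MonoidAlgebra R (DihedralGroup 0)) :
        Set (MonoidAlgebra R (DihedralGroup 0))) := by
  refine ⟨aeval_of_add_of_inv_injective not_isOfFinOrder_r_one, ?_⟩
  rw [Subring.coe_center]
  refine subset_antisymm ?_ fun x hx ↦ ?_
  · have hT : dihedralT R ∈ Subalgebra.center R (MonoidAlgebra R (DihedralGroup 0)) :=
      of_r_one_add_of_inv_mem_center R 0
    rintro _ ⟨p, rfl⟩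
    exact Algebra.adjoin_le (Set.singleton_subset_iff.mpr hT)
      (aeval_mem_adjoin_singleton R (dihedralT R))
  · refine mem_range_aeval_of_add_of_inv not_isOfFinOrder_r_one
      (support_coeff_subset_range_zpow_of_mem_center hx) fun j ↦ ?_
    rw [zpow_neg, r_one_zpow, inv_r]
    exact coeff_eq_of_isConj hx (isConj_r_neg _)

/-- Let `R` be a commutative ring in which `2` is invertible and let `G` be the infinite
dihedral group `⟨α, β | α² = 1, αβα⁻¹ = β⁻¹⟩`. Then the center of the group algebra
`R[G]` is the polynomial ring over `R` on `T = β + β⁻¹`: the `R`-algebra homomorphism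
`R[X] → R[G]` sending `X` to `β + β⁻¹` is injective with range the center of `R[G]`. -/
theorem center_groupAlgebra_infinite_dihedral (R : Type*) [CommRing R]
    (h2 : IsUnit (2 : R)) :
    Function.Injective
      (Polynomial.aeval (dihedralT R) :
        Polynomial R →ₐ[R] MonoidAlgebra R (DihedralGroup 0)) ∧
    Set.range
      (Polynomial.aeval (dihedralT R) :
        Polynomial R →ₐ[R] MonoidAlgebra R (DihedralGroup 0)) =
      (Subring.center (MonoidAlgebra R (DihedralGroup 0)) :
        Set (MonoidAlgebra R (DihedralGroup 0))) :=
  center_groupAlgebra_infinite_dihedral_general R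
end
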